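/- arXiv:1208.6332 — 5 statements merged into one kernel-verified Lean document; each statement's English description precedes it below -/
import Mathlib

section
/- Define h : ℕ → ℕ by h(j) = j − ⌊j/4⌋ − 1 if j ≡ 3 (mod 4) and h(j) = j − ⌊j/4⌋ otherwise. Suppose a_AB, a_B, a_BA, a_A are functions from {j ∈ ℕ : j ≥ 3} to ℕ satisfying a_AB(3) = a_B(3) = a_BA(3) = a_A(3) = 2 and, for all j ≥ 3: a_AB(j+1) = a_A(j) + 1, a_B(j+1) = a_AB(j) + 1, a_BA(j+1) = a_B(j) + 1, and a_A(j+1) = max(a_B(j), a_BA(j)). Then for all j ≥ 3 one has a_BA(j) = h(j), a_B(j) = h(j+1) − 1, a_AB(j) = h(j+2) − 2, a_A(j) = h(j+3) − 3; consequently max(a_AB(j), a_B(j), a_BA(j), a_A(j)) = h(j) for all j ≥ 3. -/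
/-!
Going once around the cycle `A → AB → B → BA → A` of the recursion raises the degree by `3` while
advancing `j` by `4`, which is the identity `hdeg (j + 4) = hdeg j + 3`. The only other input is
that `hdeg` grows by at most one per step: it makes `hdeg j` the larger argument of the `max` in
the `A`-step, and it makes `hdeg j` the largest of the four closed forms.
-/

/-- The degree bound `h(j)`: `h(j) = j - ⌊j/4⌋ - 1` if `j ≡ 3 (mod 4)`,
and `h(j) = j - ⌊j/4⌋` otherwise. -/
def hdeg (j : ℕ) : ℕ := if j % 4 = 3 then j - j / 4 - 1 else j - j / 4

lemma hdeg_add_four (j : ℕ) : hdeg (j + 4) = hdeg j + 3 := by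
  unfold hdeg
  split_ifs <;> omega

lemma hdeg_succ_le (j : ℕ) : hdeg (j + 1) ≤ hdeg j + 1 := by
  unfold hdeg
  split_ifs <;> omega

lemma hdeg_add_le (j k : ℕ) : hdeg (j + k) ≤ hdeg j + k := by
  induction k with
  | zero => rfl
  | succ k ih => exact (hdeg_succ_le (j + k)).trans (by omega)

lemma three_le_hdeg {j : ℕ} (hj : 4 ≤ j) : 3 ≤ hdeg j := by
  unfold hdeg
  split_ifs <;> omega

/-- Lemma 1.2(a) of the paper (combinatorial core): the recursively defined
maximal degrees `a_{AB}, a_B, a_{BA}, a_A` satisfy the stated closed formulas,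
and their maximum equals `h(j)` for every `j ≥ 3`. -/
theorem stmt_0 (aAB aB aBA aA : ℕ → ℕ)
    (hAB3 : aAB 3 = 2) (hB3 : aB 3 = 2) (hBA3 : aBA 3 = 2) (hA3 : aA 3 = 2)
    (hAB : ∀ j, 3 ≤ j → aAB (j + 1) = aA j + 1)
    (hB : ∀ j, 3 ≤ j → aB (j + 1) = aAB j + 1)
    (hBA : ∀ j, 3 ≤ j → aBA (j + 1) = aB j + 1)
    (hA : ∀ j, 3 ≤ j → aA (j + 1) = max (aB j) (aBA j)) :
    ∀ j, 3 ≤ j →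
      aBA j = hdeg j ∧
      aB j = hdeg (j + 1) - 1 ∧
      aAB j = hdeg (j + 2) - 2 ∧
      aA j = hdeg (j + 3) - 3 ∧
      max (max (aAB j) (aB j)) (max (aBA j) (aA j)) = hdeg j := by
  have closed_form : ∀ j, 3 ≤ j → aBA j = hdeg j ∧ aB j = hdeg (j + 1) - 1 ∧
      aAB j = hdeg (j + 2) - 2 ∧ aA j = hdeg (j + 3) - 3 := by
    intro j hj
    induction j, hj using Nat.le_induction with
    | base => exact ⟨hBA3, hB3, hAB3, hA3⟩
    | succ j hj ih =>
      obtain ⟨hBAj, hBj, hABj, hAj⟩ := ih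
      have := hdeg_add_four j
      have := hdeg_succ_le j
      have := three_le_hdeg (j := j + 1) (by omega)
      have := three_le_hdeg (j := j + 2) (by omega)
      have := three_le_hdeg (j := j + 3) (by omega)
      simp only [Nat.add_assoc, Nat.reduceAdd]
      refine ⟨?_, ?_, ?_, ?_⟩
      · rw [hBA j hj, hBj]; omega
      · rw [hB j hj, hABj]; omega
      · rw [hAB j hj, hAj]; omega
      · rw [hA j hj, hBj, hBAj]; omega
  intro j hj
  obtain ⟨hBAj, hBj, hABj, hAj⟩ := closed_form j hj
  refine ⟨hBAj, hBj, hABj, hAj, ?_⟩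
  have := hdeg_add_le j 1
  have := hdeg_add_le j 2
  have := hdeg_add_le j 3
  rw [hBAj, hBj, hABj, hAj]
  omega
end

section
/- Let k be a field and let 1 ≤ n < g be integers. Then HH^i(E_{g,n})_{2−i} ≠ 0 for every i ≥ 5. -/
noncomputable section

/-- Basis elements of the algebra `E_{g,n}`: the idempotents `e_0, …, e_n`
(`e 0` corresponding to the structure sheaf), and the elements
`A_i, B_i, Y_i` (`1 ≤ i ≤ n`) and `X_j` (`1 ≤ j ≤ g`). -/
inductive EB (g n : ℕ) : Type
  | e : Fin (n + 1) → EB g n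
  | A : Fin n → EB g n
  | B : Fin n → EB g n
  | Y : Fin n → EB g n
  | X : Fin g → EB g n
  deriving DecidableEq, Fintype

namespace EB

variable {g n : ℕ}

/-- The idempotent acting as the identity on the left of a basis element. -/
def left : EB g n → Fin (n + 1)
  | e i => i
  | A i => i.succ
  | B _ => 0
  | Y i => i.succ
  | X _ => 0

/-- The idempotent acting as the identity on the right of a basis element. -/
def right : EB g n → Fin (n + 1)
  | e i => i
  | A _ => 0
  | B i => i.succ
  | Y i => i.succ
  | X _ => 0

/-- The (internal) degree of a basis element: `A_i` and the idempotents have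
degree `0`; `B_i`, `Y_i`, `X_j` have degree `1`. -/
def deg : EB g n → ℕ
  | e _ => 0
  | A _ => 0
  | B _ => 1
  | Y _ => 1
  | X _ => 1

/-- The multiplication table of `E_{g,n}` on basis elements: `none` encodes the
product `0`.  The only nontrivial products besides those involving idempotents
are `A_i B_i = Y_i` and `B_i A_i = X_i`. -/
def mul (hng : n ≤ g) : EB g n → EB g n → Option (EB g n)
  | e i, v => if left v = i then some v else none
  | u, e i => if right u = i then some u else none
  | A i, B j => if i = j then some (Y i) else none
  | B i, A j => if i = j then some (X (Fin.castLE hng i)) else none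
  | _, _ => none

end EB

variable (k : Type*) [Field k]

/-- Hochschild `i`-cochains on `E_{g,n}` with values in `E_{g,n}`, recorded in
coordinates with respect to the basis: `c w u` is the coefficient of the basis
element `u` in the value of the multilinear map `c` on the tuple `w` of basis
elements. -/
abbrev HCochain (g n i : ℕ) := (Fin i → EB g n) → EB g n → k

/-- A Hochschild cochain is homogeneous of internal degree `j` if its value on a
tuple of basis elements of total degree `d` lies in the component of degree `d + j`. -/
def IsHomog {g n : ℕ} (i : ℕ) (j : ℤ) (c : HCochain k g n i) : Prop :=
  ∀ w u, c w u ≠ 0 → (EB.deg u : ℤ) = (∑ m : Fin i, (EB.deg (w m) : ℤ)) + j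

/-- The Hochschild differential
`δf(a_1,…,a_{i+1}) = a_1 f(a_2,…,a_{i+1}) + ∑ₘ (-1)ᵐ f(a_1,…,a_m a_{m+1},…,a_{i+1})
 + (-1)^{i+1} f(a_1,…,a_i) a_{i+1}`, written in coordinates. -/
def hdelta {g n : ℕ} (hng : n ≤ g) (i : ℕ) (c : HCochain k g n i) :
    HCochain k g n (i + 1) := fun w u =>
  (∑ v : EB g n, if EB.mul hng (w 0) v = some u then c (fun m => w m.succ) v else 0)
  + (∑ m : Fin i, (-1 : k) ^ ((m : ℕ) + 1) *
      ((EB.mul hng (w m.castSucc) (w m.succ)).elim 0 (fun v =>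
        c (fun l => if (l : ℕ) < (m : ℕ) then w l.castSucc
          else if (l : ℕ) = (m : ℕ) then v else w l.succ) u)))
  + (-1 : k) ^ (i + 1) *
      (∑ v : EB g n, if EB.mul hng v (w (Fin.last i)) = some u then c (fun m => w m.castSucc) v else 0)

/-!
Write `T = X (Fin.last g)`. It multiplies nontrivially only with `e 0`, and since `n < g` it
is not a product `B_i A_i`. The cocycle is the sum of the two point cochains sending
`(B, A, X₀, T, …, T)` and `(B, Y, A, T, …, T)` to `T`, where `A = A 0`, `B = B 0`,
`Y = Y 0`, `X₀ = X 0`. For a point cochain on a composable tuple without idempotents, the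
terms of the differential that insert an idempotent cancel in pairs, leaving one term for each
nontrivial factorisation of an entry: `X₀ = B A` in the first tuple, `Y = A B` in the second.
Both give `(B, A, B, A, T, …, T)`, with opposite signs.

Suppose `δb` is this cocycle and evaluate at the tuples `(T, …, T, B, Y, A, T, …, T)` with
output `T`. No two neighbours in them multiply, so only the outer terms of `δb` survive, and
they involve the `e 0`-coefficients of `b` on the shorter tuples of the same shape. Descending
on the position of `B`, all these coefficients vanish, so `δb` vanishes at
`(B, Y, A, T, …, T)`, where the cocycle is `1`.
-/

namespace EB

variable {g n : ℕ}

def factor : EB g n → Option (EB g n × EB g n)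
  | Y i => some (A i, B i)
  | X j => if h : (j : ℕ) < n then some (B ⟨j, h⟩, A ⟨j, h⟩) else none
  | _ => none

theorem mul_eq_some_iff (hng : n ≤ g) {a b x : EB g n} :
    mul hng a b = some x ↔
      (a = e x.left ∧ b = x) ∨ (a = x ∧ b = e x.right) ∨ factor x = some (a, b) := by
  cases a <;> cases b <;> cases x <;> simp only [mul, factor, left, right] <;> (try split_ifs) <;>
    simp_all <;> grind

theorem ne_e_of_factor_eq_some {x a b : EB g n} (h : factor x = some (a, b)) (i : Fin (n + 1)) :
    a ≠ e i ∧ b ≠ e i := by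
  cases x <;> simp only [factor] at h <;> (try split_ifs at h) <;> grind

theorem mul_X_right_eq_some_iff (hng : n ≤ g) {a u : EB g n} {j : Fin g} :
    mul hng a (X j) = some u ↔ a = e 0 ∧ u = X j := by
  cases a <;> simp only [mul, left] <;> (try split_ifs) <;> grind

theorem mul_X_left_eq_some_iff (hng : n ≤ g) {a u : EB g n} {j : Fin g} :
    mul hng (X j) a = some u ↔ a = e 0 ∧ u = X j := by
  cases a <;> simp only [mul, right] <;> (try split_ifs) <;> grind

theorem mul_ne_some_of_factor_eq_none_left (hng : n ≤ g) {a x : EB g n} (hx : factor x = none)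
    (ha : ∀ i, a ≠ e i) (hax : a ≠ x) (b : EB g n) : mul hng a b ≠ some x := by
  rw [Ne, mul_eq_some_iff, hx]
  grind

theorem mul_ne_some_of_factor_eq_none_right (hng : n ≤ g) {b x : EB g n} (hx : factor x = none)
    (hb : ∀ i, b ≠ e i) (hbx : b ≠ x) (a : EB g n) : mul hng a b ≠ some x := by
  rw [Ne, mul_eq_some_iff, hx]
  grind

end EB

section Tuples

variable {α : Type*}

def splitAt (τ : ℕ → α) (q : ℕ) (a b : α) : ℕ → α := fun l =>
  if l < q then τ l else if l = q then a else if l = q + 1 then b else τ (l - 1)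

def insertAt (τ : ℕ → α) (q : ℕ) (a : α) : ℕ → α := fun l =>
  if l < q then τ l else if l = q then a else τ (l - 1)

theorem splitAt_apply_left (τ : ℕ → α) (q : ℕ) (a b : α) : splitAt τ q a b q = a := by
  simp [splitAt]

theorem splitAt_apply_right (τ : ℕ → α) (q : ℕ) (a b : α) :
    splitAt τ q a b (q + 1) = b := by
  simp [splitAt]

theorem splitAt_right_self_eq_insertAt (τ : ℕ → α) (q : ℕ) (a : α) :
    splitAt τ q a (τ q) = insertAt τ q a := by
  funext l
  unfold splitAt insertAt
  split_ifs <;> first | rfl | omega | (congr 1; omega)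

theorem splitAt_left_self_eq_insertAt (τ : ℕ → α) (q : ℕ) (b : α) :
    splitAt τ q (τ q) b = insertAt τ (q + 1) b := by
  funext l
  unfold splitAt insertAt
  split_ifs <;> first | rfl | omega | (congr 1; omega)

theorem eq_insertAt_zero_iff {i : ℕ} (τ : ℕ → α) (a : α) (w : Fin (i + 1) → α) :
    w = insertAt τ 0 a ∘ Fin.val ↔ w 0 = a ∧ Fin.tail w = τ ∘ Fin.val := by
  rw [← Fin.cons_self_tail w, Fin.cons_zero, Fin.tail_cons, funext_iff, Fin.forall_fin_succ]
  simp [insertAt, funext_iff]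

theorem eq_insertAt_last_iff {i : ℕ} (τ : ℕ → α) (a : α) (w : Fin (i + 1) → α) :
    w = insertAt τ i a ∘ Fin.val ↔ w (Fin.last i) = a ∧ Fin.init w = τ ∘ Fin.val := by
  rw [funext_iff, Fin.forall_fin_succ']
  simp [insertAt, funext_iff, Fin.init, and_comm]

def contractWith {i : ℕ} (w : Fin (i + 1) → α) (j : Fin i) (v : α) : Fin i → α :=
  fun l => if (l : ℕ) < j then w l.castSucc else if (l : ℕ) = j then v else w l.succ

theorem contractWith_eq_iff {i : ℕ} (τ : ℕ → α) (w : Fin (i + 1) → α) (j : Fin i)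
    (v : α) :
    contractWith w j v = τ ∘ Fin.val ↔
      v = τ j ∧ w = splitAt τ j (w j.castSucc) (w j.succ) ∘ Fin.val := by
  constructor
  · intro h
    have hv : v = τ j := by simpa [contractWith] using congrFun h j
    refine ⟨hv, funext fun l => ?_⟩
    simp only [Function.comp, splitAt]
    split_ifs with h1 h2 h3
    · have := congrFun h ⟨l, by omega⟩
      simp only [contractWith, Function.comp, if_pos (show (l : ℕ) < j from h1)] at this
      exact this
    · congr; ext; exact h2
    · congr; ext; simp; omega
    · have := congrFun h ⟨l - 1, by omega⟩
      simp only [contractWith, Function.comp] at this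
      rw [if_neg (by omega), if_neg (by omega)] at this
      rw [← this]
      congr
      ext
      simp
      omega
  · rintro ⟨rfl, hw⟩
    funext l
    simp only [contractWith, Function.comp]
    split_ifs with h1 h2
    · rw [hw]; simp [splitAt, h1]
    · rw [h2]
    · rw [hw]
      simp only [splitAt, Function.comp, Fin.val_succ]
      rw [if_neg (by omega), if_neg (by omega), if_neg (by omega), Nat.add_sub_cancel]

theorem eq_splitAt_comp_val_iff {i : ℕ} (τ : ℕ → α) (w : Fin (i + 1) → α) (j : Fin i)
    (a b : α) :
    w = splitAt τ j a b ∘ Fin.val ↔ w j.castSucc = a ∧ w j.succ = b ∧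
      w = splitAt τ j (w j.castSucc) (w j.succ) ∘ Fin.val := by
  constructor
  · intro h
    have ha : w j.castSucc = a := by rw [h]; exact splitAt_apply_left τ j a b
    have hb : w j.succ = b := by rw [h]; exact splitAt_apply_right τ j a b
    exact ⟨ha, hb, by rwa [ha, hb]⟩
  · rintro ⟨rfl, rfl, h⟩
    exact h

end Tuples

theorem sum_fin_neg_one_pow_mul_add_succ {R : Type*} [CommRing R] (f : ℕ → R) (i : ℕ) :
    ∑ q : Fin i, (-1 : R) ^ ((q : ℕ) + 1) * (f q + f (q + 1)) = (-1) ^ i * f i - f 0 := by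
  have h := Finset.sum_range_sub (fun q => (-1 : R) ^ q * f q) i
  rw [pow_zero, one_mul] at h
  rw [Fin.sum_univ_eq_sum_range (fun q => (-1 : R) ^ (q + 1) * (f q + f (q + 1))), ← h]
  refine Finset.sum_congr rfl fun q _ => ?_
  ring

section Cochains

open EB

variable {g n : ℕ} (hng : n ≤ g)

theorem hdelta_apply (i : ℕ) (c : HCochain k g n i) (w : Fin (i + 1) → EB g n)
    (u : EB g n) :
    hdelta k hng i c w u =
      (∑ v, if mul hng (w 0) v = some u then c (Fin.tail w) v else 0)
      + (∑ j : Fin i, (-1 : k) ^ ((j : ℕ) + 1) *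
          (mul hng (w j.castSucc) (w j.succ)).elim 0 (fun v => c (contractWith w j v) u))
      + (-1 : k) ^ (i + 1) *
          (∑ v, if mul hng v (w (Fin.last i)) = some u then c (Fin.init w) v else 0) :=
  rfl

theorem hdelta_add (i : ℕ) (c c' : HCochain k g n i) :
    hdelta k hng i (c + c') = hdelta k hng i c + hdelta k hng i c' := by
  funext w u
  simp only [hdelta_apply, Pi.add_apply]
  have hmid : ∀ j : Fin i, (mul hng (w j.castSucc) (w j.succ)).elim 0
      (fun v => c (contractWith w j v) u + c' (contractWith w j v) u) =
      (mul hng (w j.castSucc) (w j.succ)).elim 0 (fun v => c (contractWith w j v) u) +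
      (mul hng (w j.castSucc) (w j.succ)).elim 0 (fun v => c' (contractWith w j v) u) := by
    intro j
    cases mul hng (w j.castSucc) (w j.succ) <;> simp
  simp only [hmid, ite_add_zero, mul_add, Finset.sum_add_distrib]
  ring

theorem IsHomog.add {i : ℕ} {j : ℤ} {c c' : HCochain k g n i} (hc : IsHomog k i j c)
    (hc' : IsHomog k i j c') : IsHomog k i j (c + c') := by
  intro w u h
  by_cases h0 : c w u = 0
  · exact hc' w u (by simpa [h0] using h)
  · exact hc w u h0

def pointCochain (τ : ℕ → EB g n) (u₀ : EB g n) (i : ℕ) : HCochain k g n i :=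
  fun w u => if w = τ ∘ Fin.val ∧ u = u₀ then 1 else 0

theorem isHomog_pointCochain {i : ℕ} {j : ℤ} (τ : ℕ → EB g n) (u₀ : EB g n)
    (h : (u₀.deg : ℤ) = ∑ l : Fin i, ((τ l).deg : ℤ) + j) :
    IsHomog k i j (pointCochain k τ u₀ i) := by
  intro w u hwu
  simp only [pointCochain, ne_eq, ite_eq_right_iff, one_ne_zero, imp_false, not_not] at hwu
  rw [hwu.1, hwu.2]
  exact h

theorem hdelta_apply_of_mul_eq_none {i : ℕ} (c : HCochain k g n i) (w : Fin (i + 1) → EB g n)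
    (hw : ∀ j : Fin i, mul hng (w j.castSucc) (w j.succ) = none) (u : EB g n) :
    hdelta k hng i c w u =
      (∑ v, if mul hng (w 0) v = some u then c (Fin.tail w) v else 0)
      + (-1 : k) ^ (i + 1) *
          (∑ v, if mul hng v (w (Fin.last i)) = some u then c (Fin.init w) v else 0) := by
  simp [hdelta_apply, hw]

theorem sum_mul_X_left (j : Fin g) (f : EB g n → k) :
    (∑ v, if mul hng (X j) v = some (X j) then f v else 0) = f (e 0) := by
  simp [mul_X_left_eq_some_iff]

theorem sum_mul_X_right (j : Fin g) (f : EB g n → k) :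
    (∑ v, if mul hng v (X j) = some (X j) then f v else 0) = f (e 0) := by
  simp [mul_X_right_eq_some_iff]

theorem sum_mul_pointCochain_tail {i : ℕ} (τ : ℕ → EB g n) (j : Fin g)
    (w : Fin (i + 1) → EB g n) (u : EB g n) :
    (∑ v, if mul hng (w 0) v = some u then pointCochain k τ (X j) i (Fin.tail w) v else 0) =
      if w = insertAt τ 0 (e 0) ∘ Fin.val ∧ u = X j then 1 else 0 := by
  rw [Finset.sum_eq_single (X j) (fun v _ hv => by simp [pointCochain, hv]) (by simp)]
  simp only [pointCochain, mul_X_right_eq_some_iff, eq_insertAt_zero_iff, and_true]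
  split_ifs <;> tauto

theorem sum_mul_pointCochain_init {i : ℕ} (τ : ℕ → EB g n) (j : Fin g)
    (w : Fin (i + 1) → EB g n) (u : EB g n) :
    (∑ v, if mul hng v (w (Fin.last i)) = some u then pointCochain k τ (X j) i (Fin.init w) v
      else 0) =
      if w = insertAt τ i (e 0) ∘ Fin.val ∧ u = X j then 1 else 0 := by
  rw [Finset.sum_eq_single (X j) (fun v _ hv => by simp [pointCochain, hv]) (by simp)]
  simp only [pointCochain, mul_X_left_eq_some_iff, eq_insertAt_last_iff, and_true]
  split_ifs <;> tauto

theorem elim_mul_pointCochain_contractWith {i : ℕ} (τ : ℕ → EB g n) (u₀ : EB g n)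
    (w : Fin (i + 1) → EB g n) (q : Fin i) (hq : ∀ a, τ q ≠ e a) (u : EB g n) :
    (mul hng (w q.castSucc) (w q.succ)).elim 0
        (fun v => pointCochain k τ u₀ i (contractWith w q v) u) =
      if u = u₀ then
        (if w = splitAt τ q (e (τ q).left) (τ q) ∘ Fin.val then 1 else 0)
        + (if w = splitAt τ q (τ q) (e (τ q).right) ∘ Fin.val then 1 else 0)
        + (factor (τ q)).elim 0
            (fun ab => if w = splitAt τ q ab.1 ab.2 ∘ Fin.val then 1 else 0)
      else 0 := by
  have hsplit : (mul hng (w q.castSucc) (w q.succ)).elim 0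
        (fun v => pointCochain k τ u₀ i (contractWith w q v) u) =
      if u = u₀ ∧ mul hng (w q.castSucc) (w q.succ) = some (τ q) ∧
        w = splitAt τ q (w q.castSucc) (w q.succ) ∘ Fin.val then 1 else 0 := by
    cases h : mul hng (w q.castSucc) (w q.succ) with
    | none => simp
    | some v =>
      simp only [Option.elim, pointCochain, contractWith_eq_iff, Option.some.injEq]
      split_ifs <;> grind
  rw [hsplit]
  simp only [eq_splitAt_comp_val_iff τ w q (e (τ q).left) (τ q),
    eq_splitAt_comp_val_iff τ w q (τ q) (e (τ q).right), mul_eq_some_iff]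
  rcases hf : factor (τ q) with _ | ⟨a, b⟩
  · split_ifs <;> grind
  · have hab := ne_e_of_factor_eq_some hf
    simp only [Option.elim_some, eq_splitAt_comp_val_iff τ w q a b]
    split_ifs <;> grind

theorem hdelta_pointCochain_X {i : ℕ} (τ : ℕ → EB g n) (j : Fin g)
    (hτ : ∀ l a, τ l ≠ e a) (hcomp : ∀ l, (τ l).right = (τ (l + 1)).left)
    (h0 : (τ 0).left = 0) (hi : (τ i).left = 0)
    (w : Fin (i + 1) → EB g n) (u : EB g n) :
    hdelta k hng i (pointCochain k τ (X j) i) w u =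
      if u = X j then ∑ q : Fin i, (-1 : k) ^ ((q : ℕ) + 1) *
        (factor (τ q)).elim 0 (fun ab => if w = splitAt τ q ab.1 ab.2 ∘ Fin.val then 1 else 0)
      else 0 := by
  rw [hdelta_apply, sum_mul_pointCochain_tail, sum_mul_pointCochain_init]
  simp only [elim_mul_pointCochain_contractWith k hng τ (X j) w _ (hτ _)]
  by_cases hu : u = X j
  · let f : ℕ → k := fun q => if w = insertAt τ q (e (τ q).left) ∘ Fin.val then 1 else 0
    -- inserting an idempotent at slot `q + 1` arises from splitting both `τ q` and `τ (q + 1)`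
    have hpairs : ∀ q : Fin i,
        (if w = splitAt τ q (e (τ q).left) (τ q) ∘ Fin.val then (1 : k) else 0) +
          (if w = splitAt τ q (τ q) (e (τ q).right) ∘ Fin.val then 1 else 0) =
          f q + f (q + 1) := by
      intro q
      rw [splitAt_right_self_eq_insertAt, splitAt_left_self_eq_insertAt, hcomp]
    simp only [hu, and_true, if_true]
    rw [Finset.sum_congr rfl fun q _ => by rw [hpairs q, mul_add], Finset.sum_add_distrib,
      sum_fin_neg_one_pow_mul_add_succ f]
    simp only [f, h0, hi]
    ring
  · simp [hu]

theorem hdelta_pointCochain_X_of_factor_eq_ite {i p : ℕ} (hp : p < i) (τ : ℕ → EB g n)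
    (j : Fin g) (hτ : ∀ l a, τ l ≠ e a) (hcomp : ∀ l, (τ l).right = (τ (l + 1)).left)
    (h0 : (τ 0).left = 0) (hi : (τ i).left = 0) {a b : EB g n}
    (hf : ∀ l, factor (τ l) = if l = p then some (a, b) else none) (w : Fin (i + 1) → EB g n)
    (u : EB g n) :
    hdelta k hng i (pointCochain k τ (X j) i) w u =
      if u = X j ∧ w = splitAt τ p a b ∘ Fin.val then (-1) ^ (p + 1) else 0 := by
  rw [hdelta_pointCochain_X k hng τ j hτ hcomp h0 hi, Finset.sum_eq_single ⟨p, hp⟩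
    (fun q _ hq => by rw [hf, if_neg (fun h => hq (Fin.ext h)), Option.elim_none, mul_zero])
    (by simp), hf, if_pos rfl, Option.elim_some]
  split_ifs <;> simp_all

end Cochains

section Witness

open EB

variable {g n : ℕ}

def seqBAX : ℕ → EB (g + 1) (n + 1)
  | 0 => B 0
  | 1 => A 0
  | 2 => X 0
  | _ + 3 => X (Fin.last g)

def seqBYA (p : ℕ) : ℕ → EB (g + 1) (n + 1) := fun l =>
  if l = p then B 0 else if l = p + 1 then Y 0 else if l = p + 2 then A 0 else X (Fin.last g)

theorem seqBAX_of_three_le {l : ℕ} (hl : 3 ≤ l) :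
    (seqBAX l : EB (g + 1) (n + 1)) = X (Fin.last g) := by
  obtain ⟨l, rfl⟩ := Nat.exists_eq_add_of_le' hl
  rfl

theorem seqBYA_of_ne {p l : ℕ} (h : l ≠ p ∧ l ≠ p + 1 ∧ l ≠ p + 2) :
    (seqBYA p l : EB (g + 1) (n + 1)) = X (Fin.last g) := by
  simp [seqBYA, h.1, h.2.1, h.2.2]

theorem factor_X_last (hlt : n < g) :
    factor (X (Fin.last g) : EB (g + 1) (n + 1)) = none := by
  simp [factor]
  omega

theorem seqBAX_ne_e (l : ℕ) (a : Fin (n + 2)) : (seqBAX l : EB (g + 1) (n + 1)) ≠ e a := by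
  rcases l with _ | _ | _ | l <;> simp [seqBAX]

theorem seqBYA_ne_e (p l : ℕ) (a : Fin (n + 2)) : (seqBYA p l : EB (g + 1) (n + 1)) ≠ e a := by
  unfold seqBYA
  split_ifs <;> simp

theorem right_seqBAX (l : ℕ) :
    (seqBAX l : EB (g + 1) (n + 1)).right = (seqBAX (l + 1) : EB (g + 1) (n + 1)).left := by
  rcases l with _ | _ | _ | l <;> rfl

theorem right_seqBYA (p l : ℕ) :
    (seqBYA p l : EB (g + 1) (n + 1)).right = (seqBYA p (l + 1) : EB (g + 1) (n + 1)).left := by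
  unfold seqBYA
  split_ifs <;> first | omega | rfl

theorem factor_seqBAX (hlt : n < g) (l : ℕ) :
    factor (seqBAX l : EB (g + 1) (n + 1)) = if l = 2 then some (B 0, A 0) else none := by
  rcases l with _ | _ | _ | l
  · rfl
  · rfl
  · simp [seqBAX, factor]
  · simp [seqBAX, factor_X_last hlt]

theorem factor_seqBYA_zero (hlt : n < g) (l : ℕ) :
    factor (seqBYA 0 l : EB (g + 1) (n + 1)) = if l = 1 then some (A 0, B 0) else none := by
  rcases l with _ | _ | _ | l
  · rfl
  · rfl
  · rfl
  · simp [seqBYA, factor_X_last hlt]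

theorem splitAt_seqBAX_eq_splitAt_seqBYA :
    splitAt (seqBAX : ℕ → EB (g + 1) (n + 1)) 2 (B 0) (A 0) =
      splitAt (seqBYA 0) 1 (A 0) (B 0) := by
  funext l
  rcases l with _ | _ | _ | _ | l
  all_goals simp [splitAt, seqBAX, seqBYA]

def cocycle (m : ℕ) : HCochain k (g + 1) (n + 1) (m + 1) :=
  pointCochain k seqBAX (X (Fin.last g)) (m + 1) +
    pointCochain k (seqBYA 0) (X (Fin.last g)) (m + 1)

theorem hdelta_cocycle (hlt : n + 1 < g + 1) {m : ℕ} (hm : 2 ≤ m) :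
    hdelta k hlt.le (m + 1) (cocycle k m) = 0 := by
  funext w u
  rw [cocycle, hdelta_add, Pi.add_apply, Pi.add_apply,
    hdelta_pointCochain_X_of_factor_eq_ite k hlt.le (p := 2) (by omega) _ _ seqBAX_ne_e
      right_seqBAX rfl (by rw [seqBAX_of_three_le (by omega)]; rfl) (factor_seqBAX (by omega)),
    hdelta_pointCochain_X_of_factor_eq_ite k hlt.le (p := 1) (by omega) _ _ (seqBYA_ne_e 0)
      (right_seqBYA 0) rfl (by rw [seqBYA_of_ne (by omega)]; rfl) (factor_seqBYA_zero (by omega)),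
    splitAt_seqBAX_eq_splitAt_seqBYA]
  split_ifs <;> norm_num

theorem sum_deg_seqBAX {m : ℕ} (hm : 2 ≤ m) :
    ∑ l : Fin (m + 1), ((seqBAX l : EB (g + 1) (n + 1)).deg : ℤ) = m := by
  obtain ⟨r, rfl⟩ := Nat.exists_eq_add_of_le' hm
  simp [Fin.sum_univ_succ, deg, seqBAX]
  ring

theorem sum_deg_seqBYA_zero {m : ℕ} (hm : 2 ≤ m) :
    ∑ l : Fin (m + 1), ((seqBYA 0 l : EB (g + 1) (n + 1)).deg : ℤ) = m := by
  obtain ⟨r, rfl⟩ := Nat.exists_eq_add_of_le' hm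
  simp [Fin.sum_univ_succ, deg, seqBYA]
  ring

theorem isHomog_cocycle {m : ℕ} (hm : 2 ≤ m) :
    IsHomog k (m + 1) (2 - ((m : ℤ) + 1)) (cocycle k m : HCochain k (g + 1) (n + 1) (m + 1)) :=
  (isHomog_pointCochain k _ _ (by rw [sum_deg_seqBAX hm, deg]; ring)).add k
    (isHomog_pointCochain k _ _ (by rw [sum_deg_seqBYA_zero hm, deg]; ring))

theorem seqBYA_succ_succ (p l : ℕ) :
    (seqBYA (p + 1) (l + 1) : EB (g + 1) (n + 1)) = seqBYA p l := by
  simp [seqBYA]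

theorem mul_seqBYA_seqBYA_succ (hng : n + 1 ≤ g + 1) (p l : ℕ) :
    mul hng (seqBYA p l : EB (g + 1) (n + 1)) (seqBYA p (l + 1)) = none := by
  unfold seqBYA
  split_ifs <;> first | omega | rfl

theorem hdelta_seqBYA_succ (hlt : n + 1 < g + 1) {m : ℕ} (b : HCochain k (g + 1) (n + 1) m)
    {p : ℕ} (hp : p + 3 ≤ m) :
    hdelta k hlt.le m b (seqBYA (p + 1) ∘ Fin.val) (X (Fin.last g)) =
      b (seqBYA p ∘ Fin.val) (e 0) +
        (-1) ^ (m + 1) * if p + 3 = m then 0 else b (seqBYA (p + 1) ∘ Fin.val) (e 0) := by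
  rw [hdelta_apply_of_mul_eq_none k hlt.le b _ (fun j => mul_seqBYA_seqBYA_succ _ _ _)]
  have htail : Fin.tail (seqBYA (p + 1) ∘ Fin.val : Fin (m + 1) → EB (g + 1) (n + 1)) =
      seqBYA p ∘ Fin.val := funext fun l => seqBYA_succ_succ p l
  simp only [Function.comp_apply, Fin.val_zero, Fin.val_last, htail,
    seqBYA_of_ne (show 0 ≠ p + 1 ∧ 0 ≠ p + 1 + 1 ∧ 0 ≠ p + 1 + 2 by omega),
    sum_mul_X_left]
  congr 2
  split_ifs with hpm
  · refine Finset.sum_eq_zero fun v _ => if_neg ?_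
    have hA : (seqBYA (p + 1) m : EB (g + 1) (n + 1)) = A 0 := by simp [seqBYA, ← hpm]
    rw [hA]
    exact mul_ne_some_of_factor_eq_none_right _ (factor_X_last (by omega)) (by simp) (by simp) v
  · simp only [seqBYA_of_ne (show m ≠ p + 1 ∧ m ≠ p + 1 + 1 ∧ m ≠ p + 1 + 2 by omega),
      sum_mul_X_right]
    rfl

theorem hdelta_seqBYA_zero (hlt : n + 1 < g + 1) {m : ℕ} (b : HCochain k (g + 1) (n + 1) m)
    (hm : 3 ≤ m) :
    hdelta k hlt.le m b (seqBYA 0 ∘ Fin.val) (X (Fin.last g)) =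
      (-1) ^ (m + 1) * b (seqBYA 0 ∘ Fin.val) (e 0) := by
  rw [hdelta_apply_of_mul_eq_none k hlt.le b _ (fun j => mul_seqBYA_seqBYA_succ _ _ _)]
  have hB : (seqBYA 0 0 : EB (g + 1) (n + 1)) = B 0 := rfl
  simp only [Function.comp_apply, Fin.val_zero, Fin.val_last, hB,
    seqBYA_of_ne (show m ≠ 0 ∧ m ≠ 0 + 1 ∧ m ≠ 0 + 2 by omega), sum_mul_X_right]
  rw [Finset.sum_eq_zero fun v _ => if_neg
    (mul_ne_some_of_factor_eq_none_left _ (factor_X_last (by omega)) (by simp) (by simp) v),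
    zero_add]
  rfl

theorem cocycle_seqBYA_succ (m p : ℕ) :
    cocycle k m (seqBYA (p + 1) ∘ Fin.val) (X (Fin.last g) : EB (g + 1) (n + 1)) = 0 := by
  have hne : ∀ τ : ℕ → EB (g + 1) (n + 1), τ 0 = B 0 →
      (seqBYA (p + 1) ∘ Fin.val : Fin (m + 1) → EB (g + 1) (n + 1)) ≠ τ ∘ Fin.val := by
    intro τ hτ h
    have := congrFun h 0
    simp [seqBYA, hτ] at this
  simp [cocycle, pointCochain, hne seqBAX rfl, hne (seqBYA 0) rfl]

theorem cocycle_seqBYA_zero {m : ℕ} (hm : 1 ≤ m) :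
    cocycle k m (seqBYA 0 ∘ Fin.val) (X (Fin.last g) : EB (g + 1) (n + 1)) = 1 := by
  have hne :
      seqBYA 0 ∘ Fin.val ≠ (seqBAX ∘ Fin.val : Fin (m + 1) → EB (g + 1) (n + 1)) := by
    intro h
    have := congrFun h ⟨1, by omega⟩
    simp [seqBYA, seqBAX] at this
  simp [cocycle, pointCochain, hne]

theorem hdelta_ne_cocycle (hlt : n + 1 < g + 1) {m : ℕ} (hm : 3 ≤ m)
    (b : HCochain k (g + 1) (n + 1) m) : hdelta k hlt.le m b ≠ cocycle k m := by
  intro hb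
  have hchain : ∀ p, p ≤ m - 3 → b (seqBYA p ∘ Fin.val) (e 0) = 0 := by
    intro p hp
    induction hp using Nat.decreasingInduction with
    | self =>
      have h := congrFun₂ hb (seqBYA (m - 3 + 1) ∘ Fin.val) (X (Fin.last g))
      rw [hdelta_seqBYA_succ k hlt b (by omega), cocycle_seqBYA_succ, if_pos (by omega)] at h
      simpa using h
    | of_succ p hp ih =>
      have h := congrFun₂ hb (seqBYA (p + 1) ∘ Fin.val) (X (Fin.last g))
      rw [hdelta_seqBYA_succ k hlt b (by omega), cocycle_seqBYA_succ, if_neg (by omega), ih] at h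
      simpa using h
  have h := congrFun₂ hb (seqBYA 0 ∘ Fin.val) (X (Fin.last g))
  rw [hdelta_seqBYA_zero k hlt b hm, cocycle_seqBYA_zero k (by omega),
    hchain 0 (Nat.zero_le _)] at h
  simp at h

end Witness

/-- Theorem 1.1(ii) of the paper: for `1 ≤ n < g`, `HH^i(E_{g,n})_{2-i} ≠ 0`
for every `i ≥ 5` (writing `i = m + 1`, i.e. `m ≥ 4`): there is a homogeneous
cocycle of internal degree `2 - i` which is not the differential of any
homogeneous cochain. -/
theorem stmt_2 (k : Type*) [Field k] (g n : ℕ) (h1 : 1 ≤ n) (h2 : n < g) :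
    ∀ m : ℕ, 4 ≤ m →
      ∃ c : HCochain k g n (m + 1),
        IsHomog k (m + 1) (2 - ((m : ℤ) + 1)) c ∧
        hdelta k h2.le (m + 1) c = 0 ∧
        ∀ b : HCochain k g n m, IsHomog k m (2 - ((m : ℤ) + 1)) b →
          hdelta k h2.le m b ≠ c := by
  intro m hm
  obtain ⟨n, rfl⟩ : ∃ n', n = n' + 1 := ⟨n - 1, by omega⟩
  obtain ⟨g, rfl⟩ : ∃ g', g = g' + 1 := ⟨g - 1, by omega⟩
  exact ⟨cocycle k m, isHomog_cocycle k (by omega), hdelta_cocycle k h2 (by omega),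
    fun b _ => hdelta_ne_cocycle k h2 (by omega) b⟩
end
end

section
/- Let k be a field, 1 ≤ n < g, and i ≥ 5. Set X := X_{n+1} ∈ E_{g,n}. Then the Hochschild i-cochain c := [(X, B_1, Y_1, A_1, X, …, X)]^* X_1 + [(X, X_1, B_1, A_1, X, …, X)]^* X_1 (each tuple has length i, ending in i−4 copies of X) lies in C^i(E_{g,n})_{2−i}, satisfies δ(c) = 0, and is not a coboundary, i.e. c ∉ δ(C^{i−1}(E_{g,n})_{2−i}). -/
noncomputable section

variable (k : Type*) [Field k]

/-- The Hochschild `i`-cochain (for `i = m+1 ≥ 5`)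
`c = [X B₁ Y₁ A₁ X^{i-4}]^* X₁ + [X X₁ B₁ A₁ X^{i-4}]^* X₁` on `E_{g,n}`,
where `X = X_{n+1}` (which exists since `n < g`). -/
def xiCocycle {k : Type*} [Field k] {g n : ℕ} (h1 : 1 ≤ n) (h2 : n < g) (m : ℕ) :
    HCochain k g n (m + 1) := fun w u =>
  (if (w = fun l : Fin (m + 1) =>
        if (l : ℕ) = 0 then EB.X ⟨n, h2⟩
        else if (l : ℕ) = 1 then EB.B ⟨0, h1⟩
        else if (l : ℕ) = 2 then EB.Y ⟨0, h1⟩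
        else if (l : ℕ) = 3 then EB.A ⟨0, h1⟩
        else EB.X ⟨n, h2⟩) ∧ u = EB.X (Fin.castLE h2.le ⟨0, h1⟩) then 1 else 0)
  + (if (w = fun l : Fin (m + 1) =>
        if (l : ℕ) = 0 then EB.X ⟨n, h2⟩
        else if (l : ℕ) = 1 then EB.X (Fin.castLE h2.le ⟨0, h1⟩)
        else if (l : ℕ) = 2 then EB.B ⟨0, h1⟩
        else if (l : ℕ) = 3 then EB.A ⟨0, h1⟩
        else EB.X ⟨n, h2⟩) ∧ u = EB.X (Fin.castLE h2.le ⟨0, h1⟩) then 1 else 0)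

/-!
Evaluate `δc` on a tuple `w` of `m + 2` basis elements. Its `q`-th term, with sign `(-1)^q`, is
nonzero only for the coefficient of `X₁`, and then exactly when the `q`-th face map collapses `w`
onto one of the two words `X B₁ Y₁ A₁ X ⋯`, `X X₁ B₁ A₁ X ⋯` defining `c`. These collapses come
in adjacent pairs `q, q + 1`: either `w` is one of the words with an idempotent inserted, which the
products on both sides of it absorb, or `w = X B₁ A₁ B₁ A₁ X ⋯`, which collapses onto the first
word through `A₁ B₁ = Y₁` and onto the second through `B₁ A₁ = X₁`. So the alternating sum is zero.

On the other hand no two neighbouring letters of `X B₁ Y₁ A₁ X ⋯` multiply to a nonzero element,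
and `X₁` is not a multiple of `X = X_{n+1}`, so every `δb` vanishes there while `c` does not.
-/

theorem Finset.sum_range_neg_one_pow_mul_ite_eq_zero {R : Type*} [Ring R] (P : ℕ → Prop)
    [DecidablePred P] (N : ℕ)
    (hP : ∀ q ≤ N, P q → Xor (q ≠ 0 ∧ P (q - 1)) (q < N ∧ P (q + 1))) :
    ∑ q ∈ Finset.range (N + 1), (-1 : R) ^ q * (if P q then 1 else 0) = 0 := by
  set D : ℕ → R := fun q => (-1) ^ q * if P q ∧ P (q + 1) then 1 else 0
  have hsplit : ∀ q ∈ Finset.range (N + 1), (-1 : R) ^ q * (if P q then 1 else 0) =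
      (-1) ^ q * (if q ≠ 0 ∧ P (q - 1) ∧ P q then 1 else 0) + (if q < N then D q else 0) := by
    intro q hq
    have hqN : q ≤ N := Nat.lt_succ_iff.mp (Finset.mem_range.mp hq)
    by_cases hq' : P q
    · rcases hP q hqN hq' with ⟨h, h'⟩ | ⟨h, h'⟩ <;> by_cases q < N <;> simp_all [D]
    · simp [hq', D]
  have hlower : ∑ q ∈ Finset.range (N + 1), (-1 : R) ^ q *
      (if q ≠ 0 ∧ P (q - 1) ∧ P q then 1 else 0) = -∑ q ∈ Finset.range N, D q := by
    simp [Finset.sum_range_succ', D, pow_succ, ← Finset.sum_neg_distrib, apply_ite]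
  have hupper : ∑ q ∈ Finset.range (N + 1), (if q < N then D q else 0) =
      ∑ q ∈ Finset.range N, D q := by
    rw [Finset.sum_range_succ, if_neg (lt_irrefl N), add_zero]
    exact Finset.sum_congr rfl fun q hq => if_pos (Finset.mem_range.mp hq)
  rw [Finset.sum_congr rfl hsplit, Finset.sum_add_distrib, hlower, hupper, neg_add_cancel]

namespace EB

variable {g n : ℕ} {hng : n ≤ g}

theorem mul_eq_some {x y z : EB g n} (h : mul hng x y = some z) :
    (x = e z.left ∧ y = z) ∨ ((∀ j, x ≠ e j) ∧ x = z ∧ y = e z.right) ∨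
      (∃ i, x = A i ∧ y = B i ∧ z = Y i) ∨ (∃ i, x = B i ∧ y = A i ∧ z = X (Fin.castLE hng i)) := by
  cases x <;> cases y <;> simp only [mul, left, right] at h <;> (try split_ifs at h) <;>
    simp_all <;> aesop

theorem mul_e_left_self (y : EB g n) : mul hng (e y.left) y = some y := by
  simp [mul]

theorem mul_e_right_self (x : EB g n) : mul hng x (e x.right) = some x := by
  cases x <;> simp [mul, left, right]

theorem e_zero_mul_eq_some_e_zero_iff {y : EB g n} : mul hng (e 0) y = some (e 0) ↔ y = e 0 := by
  constructor
  · intro h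
    rcases mul_eq_some h with ⟨-, rfl⟩ | ⟨h, -⟩ | ⟨_, h, -⟩ | ⟨_, h, -⟩ <;> simp_all
  · rintro rfl; rfl

theorem mul_e_zero_eq_some_e_zero_iff {x : EB g n} : mul hng x (e 0) = some (e 0) ↔ x = e 0 := by
  constructor
  · intro h
    rcases mul_eq_some h with ⟨h, -⟩ | ⟨-, rfl, -⟩ | ⟨_, -, h, -⟩ | ⟨_, -, h, -⟩ <;> simp_all [left]
  · rintro rfl; rfl

theorem mul_X_eq_some_iff {x u : EB g n} {j : Fin g} :
    mul hng x (X j) = some u ↔ x = e 0 ∧ u = X j := by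
  constructor
  · intro h
    rcases mul_eq_some h with ⟨h, rfl⟩ | ⟨-, -, h⟩ | ⟨_, -, h, -⟩ | ⟨_, -, h, -⟩ <;> simp_all [left]
  · rintro ⟨rfl, rfl⟩; rfl

theorem X_mul_eq_some_iff {y u : EB g n} {j : Fin g} :
    mul hng (X j) y = some u ↔ y = e 0 ∧ u = X j := by
  constructor
  · intro h
    rcases mul_eq_some h with ⟨h, -⟩ | ⟨-, rfl, rfl⟩ | ⟨_, h, -⟩ | ⟨_, h, -⟩ <;> simp_all [right]
  · rintro ⟨rfl, rfl⟩; rfl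

end EB

namespace XiCocycle

open EB

section Pad

variable {g n N : ℕ}

/-- A tuple `w₀ ⋯ w_{N-1}` as the word `e₀ w₀ ⋯ w_{N-1} e₀ e₀ ⋯` indexed by `ℕ`. -/
def pad (w : Fin N → EB g n) (l : ℕ) : EB g n :=
  if h : 0 < l ∧ l ≤ N then w ⟨l - 1, by omega⟩ else e 0

theorem pad_zero (w : Fin N → EB g n) : pad w 0 = e 0 := by simp [pad]

theorem pad_succ (w : Fin N → EB g n) (i : Fin N) : pad w (i + 1) = w i := by
  simp [pad, i.isLt]

theorem pad_of_lt (w : Fin N → EB g n) {l : ℕ} (hl : N < l) : pad w l = e 0 := by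
  simp [pad]; omega

theorem pad_injective : Function.Injective (pad (g := g) (n := n) (N := N)) := by
  intro w w' h
  funext i
  rw [← pad_succ w, ← pad_succ w', h]

theorem pad_tail (w : Fin (N + 1) → EB g n) {l : ℕ} (hl : 0 < l) :
    pad (fun j => w j.succ) l = pad w (l + 1) := by
  simp only [pad]
  split_ifs <;> first | rfl | omega | (congr 1; ext; simp; omega)

theorem pad_init (w : Fin (N + 1) → EB g n) {l : ℕ} (hl : l ≤ N) :
    pad (fun j => w j.castSucc) l = pad w l := by
  simp only [pad]
  split_ifs <;> first | omega | rfl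

theorem pad_contract (w : Fin (N + 1) → EB g n) (p : Fin N) (v : EB g n) (l : ℕ) :
    pad (fun j : Fin N => if (j : ℕ) < p then w j.castSucc
      else if (j : ℕ) = p then v else w j.succ) l =
      if l ≤ p then pad w l else if l = p + 1 then v else pad w (l + 1) := by
  simp only [pad]
  split_ifs <;> first | rfl | omega | (congr 1; ext; simp; omega)

end Pad

variable {g n m : ℕ} (h1 : 1 ≤ n) (h2 : n < g) {k}

def X1 : EB g n := X (Fin.castLE h2.le ⟨0, h1⟩)

/-- `letter true` spells `X B₁ Y₁ A₁ X X ⋯` and `letter false` spells `X X₁ B₁ A₁ X X ⋯`,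
with `X = X_{n+1}`. -/
def letter : Bool → ℕ → EB g n
  | true, l =>
    if l = 0 then X ⟨n, h2⟩ else if l = 1 then B ⟨0, h1⟩ else if l = 2 then Y ⟨0, h1⟩
    else if l = 3 then A ⟨0, h1⟩ else X ⟨n, h2⟩
  | false, l =>
    if l = 0 then X ⟨n, h2⟩ else if l = 1 then X1 h1 h2 else if l = 2 then B ⟨0, h1⟩
    else if l = 3 then A ⟨0, h1⟩ else X ⟨n, h2⟩

def template (ε : Bool) (m : ℕ) : Fin (m + 1) → EB g n := fun l => letter h1 h2 ε l

theorem template_true_ne_false (hm : 1 ≤ m) :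
    template h1 h2 true m ≠ template h1 h2 false m := by
  intro h
  simpa [template, letter, X1] using congrFun h ⟨1, by omega⟩

theorem xiCocycle_apply (hm : 1 ≤ m) (w : Fin (m + 1) → EB g n) (u : EB g n) :
    xiCocycle (k := k) h1 h2 m w u =
      if (∃ ε, w = template h1 h2 ε m) ∧ u = X1 h1 h2 then 1 else 0 := by
  have key : xiCocycle (k := k) h1 h2 m w u =
      (if w = template h1 h2 true m ∧ u = X1 h1 h2 then 1 else 0) +
        (if w = template h1 h2 false m ∧ u = X1 h1 h2 then 1 else 0) := rfl
  have := template_true_ne_false h1 h2 hm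
  rw [key]
  by_cases ht : w = template h1 h2 true m <;> by_cases hf : w = template h1 h2 false m <;>
    simp_all [Bool.exists_bool]

abbrev word (ε : Bool) (m : ℕ) : ℕ → EB g n := pad (template h1 h2 ε m)

theorem word_zero (ε : Bool) : word h1 h2 ε m 0 = e 0 := pad_zero _

theorem word_succ (ε : Bool) {l : ℕ} (hl : l ≤ m) : word h1 h2 ε m (l + 1) = letter h1 h2 ε l :=
  pad_succ _ ⟨l, Nat.lt_succ_of_le hl⟩

theorem word_of_lt (ε : Bool) {l : ℕ} (hl : m + 1 < l) : word h1 h2 ε m l = e 0 := pad_of_lt _ hl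

theorem letter_ne_e (ε : Bool) (l : ℕ) (j : Fin (n + 1)) : letter h1 h2 ε l ≠ e j := by
  cases ε <;> simp only [letter, X1] <;> split_ifs <;> simp

theorem letter_of_four_le (ε : Bool) {l : ℕ} (hl : 4 ≤ l) : letter h1 h2 ε l = X ⟨n, h2⟩ := by
  cases ε <;> simp only [letter] <;> split_ifs <;> first | omega | rfl

theorem word_ne_e (ε : Bool) {l : ℕ} (hl0 : 0 < l) (hl : l ≤ m + 1) (j : Fin (n + 1)) :
    word h1 h2 ε m l ≠ e j := by
  obtain ⟨l, rfl⟩ : ∃ l', l = l' + 1 := ⟨l - 1, by omega⟩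
  rw [word_succ h1 h2 ε (by omega)]
  exact letter_ne_e h1 h2 ε l j

theorem right_word (hm : 4 ≤ m) (ε : Bool) (l : ℕ) :
    (word h1 h2 ε m l).right = (word h1 h2 ε m (l + 1)).left := by
  rcases Nat.lt_or_ge (m + 1) l with hl | hl
  · rw [word_of_lt h1 h2 ε hl, word_of_lt h1 h2 ε (by omega)]
    rfl
  rcases l with _ | l
  · rw [word_zero, word_succ h1 h2 ε (by omega)]
    cases ε <;> rfl
  rw [word_succ h1 h2 ε (by omega)]
  rcases Nat.lt_or_ge l m with hl' | hl'
  · rw [word_succ h1 h2 ε hl']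
    rcases l with _ | _ | _ | _ | l <;> cases ε <;> simp [letter, left, right, X1]
  · rw [word_of_lt h1 h2 ε (by omega), letter_of_four_le h1 h2 ε (by omega)]
    rfl

theorem letter_true_eq_letter_false {l : ℕ} (hl1 : l ≠ 1) (hl2 : l ≠ 2) :
    letter h1 h2 true l = letter h1 h2 false l := by
  simp only [letter]
  split_ifs <;> first | omega | rfl

theorem word_true_eq_word_false {l : ℕ} (hl2 : l ≠ 2) (hl3 : l ≠ 3) :
    word h1 h2 true m l = word h1 h2 false m l := by
  rcases Nat.lt_or_ge (m + 1) l with hl | hl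
  · rw [word_of_lt h1 h2 _ hl, word_of_lt h1 h2 _ hl]
  rcases l with _ | l
  · rw [word_zero, word_zero]
  rw [word_succ h1 h2 _ (by omega), word_succ h1 h2 _ (by omega),
    letter_true_eq_letter_false h1 h2 (by omega) (by omega)]

theorem eq_of_word_eq_Y {ε : Bool} {l : ℕ} {i : Fin n} (h : word h1 h2 ε m l = Y i) :
    ε = true ∧ l = 3 ∧ i = ⟨0, h1⟩ := by
  rcases Nat.lt_or_ge (m + 1) l with hl | hl
  · simp [word_of_lt h1 h2 ε hl] at h
  rcases l with _ | l
  · simp [word_zero] at h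
  rw [word_succ h1 h2 ε (by omega)] at h
  rcases l with _ | _ | _ | _ | l <;> cases ε <;> simp_all [letter, X1]

theorem eq_of_word_eq_X {ε : Bool} {l : ℕ} {i : Fin n}
    (h : word h1 h2 ε m l = X (Fin.castLE h2.le i)) :
    ε = false ∧ l = 2 ∧ i = ⟨0, h1⟩ := by
  rcases Nat.lt_or_ge (m + 1) l with hl | hl
  · simp [word_of_lt h1 h2 ε hl] at h
  rcases l with _ | l
  · simp [word_zero] at h
  rw [word_succ h1 h2 ε (by omega)] at h
  rcases l with _ | _ | _ | _ | l <;> cases ε <;> simp_all [letter, X1, Fin.ext_iff] <;> omega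

theorem eq_template_iff {ε : Bool} {t : Fin (m + 1) → EB g n} :
    t = template h1 h2 ε m ↔ ∀ l, pad t l = word h1 h2 ε m l :=
  pad_injective.eq_iff.symm.trans funext_iff

section Collapses

/-- The `q`-th face of `δ` sends `w` to `template ε m`: in the padded words, the letters `q` and
`q + 1` of `w` multiply to the letter `q` of the template and all other letters agree. -/
def Collapses (w : Fin (m + 2) → EB g n) (ε : Bool) (q : ℕ) : Prop :=
  mul h2.le (pad w q) (pad w (q + 1)) = some (word h1 h2 ε m q) ∧
    (∀ l < q, pad w l = word h1 h2 ε m l) ∧ ∀ l, q < l → pad w (l + 1) = word h1 h2 ε m l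

variable {h1 h2} {w : Fin (m + 2) → EB g n} {ε : Bool} {q : ℕ}

theorem Collapses.pred (hm : 4 ≤ m) (hc : Collapses h1 h2 w ε (q + 1))
    (hx : pad w (q + 1) = e (word h1 h2 ε m (q + 1)).left)
    (hy : pad w (q + 2) = word h1 h2 ε m (q + 1)) : Collapses h1 h2 w ε q := by
  obtain ⟨-, hlt, hgt⟩ := hc
  refine ⟨?_, fun l hl => hlt l (by omega), fun l hl => ?_⟩
  · rw [hlt q q.lt_succ_self, hx, ← right_word h1 h2 hm]
    exact mul_e_right_self _
  · rcases (Nat.succ_le_of_lt hl).eq_or_lt with rfl | hl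
    · exact hy
    · exact hgt l hl

theorem Collapses.succ (hm : 4 ≤ m) (hc : Collapses h1 h2 w ε q)
    (hx : pad w q = word h1 h2 ε m q) (hy : pad w (q + 1) = e (word h1 h2 ε m q).right) :
    Collapses h1 h2 w ε (q + 1) := by
  obtain ⟨-, hlt, hgt⟩ := hc
  refine ⟨?_, fun l hl => ?_, fun l hl => hgt l (by omega)⟩
  · rw [hy, hgt (q + 1) q.lt_succ_self, right_word h1 h2 hm]
    exact mul_e_left_self _
  · rcases (Nat.lt_succ_iff.mp hl).eq_or_lt with rfl | hl
    · exact hx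
    · exact hlt l hl

theorem Collapses.of_mul_A_B (hm : 4 ≤ m) (hc : Collapses h1 h2 w true 3)
    (hx : pad w 3 = A ⟨0, h1⟩) (hy : pad w 4 = B ⟨0, h1⟩) :
    Collapses h1 h2 w false 2 ∧ ∀ ε', ¬Collapses h1 h2 w ε' 4 := by
  obtain ⟨-, hlt, hgt⟩ := hc
  refine ⟨⟨?_, fun l hl => ?_, fun l hl => ?_⟩, fun ε' hc' => ?_⟩
  · rw [hlt 2 (by omega), hx, word_succ h1 h2 _ (by omega), word_succ h1 h2 _ (by omega)]
    simp [letter, mul, X1]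
  · rw [hlt l (by omega), word_true_eq_word_false h1 h2 (by omega) (by omega)]
  · rcases (Nat.succ_le_of_lt hl).eq_or_lt with rfl | hl
    · rw [hy, word_succ h1 h2 _ (by omega)]
      simp [letter]
    · rw [hgt l hl, word_true_eq_word_false h1 h2 (by omega) (by omega)]
  · have := hc'.1
    rw [hy, hgt 4 (by omega), word_succ h1 h2 _ (by omega), word_succ h1 h2 _ (by omega)] at this
    cases ε' <;> simp [letter, mul] at this

theorem Collapses.of_mul_B_A (hm : 4 ≤ m) (hc : Collapses h1 h2 w false 2)
    (hx : pad w 2 = B ⟨0, h1⟩) (hy : pad w 3 = A ⟨0, h1⟩) :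
    Collapses h1 h2 w true 3 ∧ ∀ ε', ¬Collapses h1 h2 w ε' 1 := by
  obtain ⟨-, hlt, hgt⟩ := hc
  refine ⟨⟨?_, fun l hl => ?_, fun l hl => ?_⟩, fun ε' hc' => ?_⟩
  · rw [hy, hgt 3 (by omega), word_succ h1 h2 _ (by omega), word_succ h1 h2 _ (by omega)]
    simp [letter, mul]
  · rcases (Nat.lt_succ_iff.mp hl).eq_or_lt with rfl | hl
    · rw [hx, word_succ h1 h2 _ (by omega)]
      simp [letter]
    · rw [hlt l hl, word_true_eq_word_false h1 h2 (by omega) (by omega)]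
  · rw [hgt l (by omega), word_true_eq_word_false h1 h2 (by omega) (by omega)]
  · have := hc'.1
    rw [hx, hlt 1 (by omega), word_succ h1 h2 _ (by omega)] at this
    simp [letter, mul] at this

theorem xor_collapses_pred_collapses_succ (hm : 4 ≤ m) (hq : q ≤ m + 2)
    (hc : Collapses h1 h2 w ε q) :
    Xor (q ≠ 0 ∧ ∃ ε, Collapses h1 h2 w ε (q - 1))
      (q < m + 2 ∧ ∃ ε, Collapses h1 h2 w ε (q + 1)) := by
  rcases mul_eq_some hc.1 with ⟨hx, hy⟩ | ⟨hne, hx, hy⟩ | ⟨i, hx, hy, hz⟩ | ⟨i, hx, hy, hz⟩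
  · rcases q with _ | q
    · refine Or.inr ⟨⟨by omega, ε, hc.succ hm ?_ ?_⟩, by simp⟩
      · rw [pad_zero, word_zero]
      · rw [hy, word_zero]; rfl
    refine Or.inl ⟨⟨q.succ_ne_zero, ε, hc.pred hm hx ?_⟩, ?_⟩
    · exact hy
    rintro ⟨hq', ε', hc'⟩
    exact word_ne_e h1 h2 ε' q.succ_pos (by omega) _ ((hc'.2.1 (q + 1) (by omega)).symm.trans hx)
  · have hq0 : q ≠ 0 := by rintro rfl; exact hne 0 (hx.trans (word_zero h1 h2 ε))
    have hqm : q < m + 2 := by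
      by_contra!
      exact hne 0 (hx.trans (word_of_lt h1 h2 ε (by omega)))
    refine Or.inr ⟨⟨hqm, ε, hc.succ hm hx hy⟩, ?_⟩
    rintro ⟨-, ε', hc'⟩
    exact word_ne_e h1 h2 ε' (Nat.pos_of_ne_zero hq0) (by omega) _
      ((hc'.2.2 q (by omega)).symm.trans hy)
  · obtain ⟨rfl, rfl, rfl⟩ := eq_of_word_eq_Y h1 h2 hz
    obtain ⟨hc', hn⟩ := hc.of_mul_A_B hm hx hy
    exact Or.inl ⟨⟨by decide, false, hc'⟩, fun ⟨_, ε', h⟩ => hn ε' h⟩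
  · obtain ⟨rfl, rfl, rfl⟩ := eq_of_word_eq_X h1 h2 hz
    obtain ⟨hc', hn⟩ := hc.of_mul_B_A hm hx hy
    exact Or.inr ⟨⟨by omega, true, hc'⟩, fun ⟨_, ε', h⟩ => hn ε' h⟩

theorem collapses_zero_iff :
    Collapses h1 h2 w ε 0 ↔ w 0 = e 0 ∧ (fun j => w j.succ) = template h1 h2 ε m := by
  rw [eq_template_iff]
  simp only [Collapses, pad_zero, Nat.not_lt_zero, false_imp_iff, implies_true,
    true_and, zero_add, e_zero_mul_eq_some_e_zero_iff]
  rw [show pad w 1 = w 0 from pad_succ w 0]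
  refine and_congr_right fun _ => forall_congr' fun l => ?_
  rcases l with _ | l
  · simp [pad_zero]
  · rw [pad_tail w l.succ_pos]; simp

theorem collapses_last_iff :
    Collapses h1 h2 w ε (m + 2) ↔
      w (Fin.last (m + 1)) = e 0 ∧ (fun j => w j.castSucc) = template h1 h2 ε m := by
  rw [eq_template_iff]
  simp only [Collapses, pad_of_lt w (show m + 2 < m + 2 + 1 by omega), word_of_lt h1 h2 ε
    (show m + 1 < m + 2 by omega), mul_e_zero_eq_some_e_zero_iff]
  rw [show pad w (m + 2) = w (Fin.last (m + 1)) from pad_succ w (Fin.last (m + 1))]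
  refine and_congr_right fun _ => ?_
  have hfar : ∀ l, m + 2 < l → pad w (l + 1) = word h1 h2 ε m l := fun l hl => by
    rw [pad_of_lt w (by omega), word_of_lt h1 h2 ε (by omega)]
  rw [and_iff_left hfar]
  refine forall_congr' fun l => ?_
  rcases le_or_gt l (m + 1) with hl | hl
  · rw [pad_init w hl]
    simp [Nat.lt_succ_of_le hl]
  · rw [pad_of_lt _ hl, word_of_lt h1 h2 ε hl]
    exact iff_of_true (fun h => absurd h (by omega)) rfl

theorem collapses_succ_iff (p : Fin (m + 1)) {v : EB g n}
    (hv : mul h2.le (w p.castSucc) (w p.succ) = some v) :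
    Collapses h1 h2 w ε (p + 1) ↔
      (fun j : Fin (m + 1) => if (j : ℕ) < p then w j.castSucc
        else if (j : ℕ) = p then v else w j.succ) = template h1 h2 ε m := by
  rw [eq_template_iff]
  simp only [pad_contract]
  rw [Collapses, show pad w (p + 1) = w p.castSucc from pad_succ w p.castSucc,
    show pad w (p + 1 + 1) = w p.succ from pad_succ w p.succ, hv, Option.some_inj]
  constructor
  · rintro ⟨rfl, hlt, hgt⟩ l
    split_ifs with h h'
    · exact hlt l (by omega)
    · rw [h']
    · exact hgt l (by omega)
  · intro h
    refine ⟨by simpa using h (p + 1), fun l hl => ?_, fun l hl => ?_⟩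
    · simpa [Nat.lt_succ_iff.mp hl] using h l
    · simpa [show ¬l ≤ p by omega, show l ≠ p + 1 by omega] using h l

open scoped Classical

theorem hdelta_xiCocycle_head_term (hm : 1 ≤ m) (w : Fin (m + 2) → EB g n) (u : EB g n) :
    (∑ v : EB g n, if mul h2.le (w 0) v = some u then
        xiCocycle (k := k) h1 h2 m (fun j => w j.succ) v else 0) =
      if u = X1 h1 h2 ∧ ∃ ε, Collapses h1 h2 w ε 0 then 1 else 0 := by
  simp_rw [xiCocycle_apply h1 h2 hm]
  rw [Fintype.sum_eq_single (X1 h1 h2) fun v hv => by simp [hv]]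
  simp only [X1, mul_X_eq_some_iff, collapses_zero_iff, ← ite_and]
  exact if_congr (by aesop) rfl rfl

theorem hdelta_xiCocycle_last_term (hm : 1 ≤ m) (w : Fin (m + 2) → EB g n) (u : EB g n) :
    (∑ v : EB g n, if mul h2.le v (w (Fin.last (m + 1))) = some u then
        xiCocycle (k := k) h1 h2 m (fun j => w j.castSucc) v else 0) =
      if u = X1 h1 h2 ∧ ∃ ε, Collapses h1 h2 w ε (m + 2) then 1 else 0 := by
  simp_rw [xiCocycle_apply h1 h2 hm]
  rw [Fintype.sum_eq_single (X1 h1 h2) fun v hv => by simp [hv]]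
  simp only [X1, X_mul_eq_some_iff, collapses_last_iff, ← ite_and]
  exact if_congr (by aesop) rfl rfl

theorem hdelta_xiCocycle_inner_term (hm : 1 ≤ m) (w : Fin (m + 2) → EB g n) (u : EB g n)
    (p : Fin (m + 1)) :
    ((mul h2.le (w p.castSucc) (w p.succ)).elim 0 fun v =>
        xiCocycle (k := k) h1 h2 m (fun l => if (l : ℕ) < p then w l.castSucc
          else if (l : ℕ) = p then v else w l.succ) u) =
      if u = X1 h1 h2 ∧ ∃ ε, Collapses h1 h2 w ε (p + 1) then 1 else 0 := by
  rcases hv : mul h2.le (w p.castSucc) (w p.succ) with _ | v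
  · refine (if_neg fun ⟨_, ε, hc⟩ => ?_).symm
    have := hc.1
    rw [show pad w (p + 1) = w p.castSucc from pad_succ w p.castSucc,
      show pad w (p + 1 + 1) = w p.succ from pad_succ w p.succ, hv] at this
    exact Option.some_ne_none _ this.symm
  · simp only [Option.elim_some, xiCocycle_apply h1 h2 hm, collapses_succ_iff p hv]
    exact if_congr and_comm rfl rfl

end Collapses

theorem hdelta_xiCocycle_eq_zero (hm : 4 ≤ m) :
    hdelta k h2.le (m + 1) (xiCocycle (k := k) h1 h2 m) = 0 := by
  classical
  funext w u
  have hm1 : 1 ≤ m := by omega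
  simp only [hdelta, hdelta_xiCocycle_head_term hm1, hdelta_xiCocycle_inner_term hm1,
    hdelta_xiCocycle_last_term hm1]
  by_cases hu : u = X1 h1 h2
  · simp only [hu, true_and]
    have := Finset.sum_range_neg_one_pow_mul_ite_eq_zero (R := k)
      (fun q => ∃ ε, Collapses h1 h2 w ε q) (m + 2)
      fun q hq ⟨ε, hc⟩ => xor_collapses_pred_collapses_succ hm hq hc
    rw [Finset.sum_range_succ, Finset.sum_range_succ', ← Fin.sum_univ_eq_sum_range] at this
    simpa [pow_succ, add_comm, add_left_comm] using this
  · simp [hu]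

theorem deg_letter (ε : Bool) (l : ℕ) :
    (deg (letter h1 h2 ε l) : ℤ) = 1 - if l = 3 then 1 else 0 := by
  rcases l with _ | _ | _ | _ | l <;> cases ε <;> simp [letter, deg, X1]

theorem sum_deg_template (hm : 3 ≤ m) (ε : Bool) :
    ∑ l : Fin (m + 1), (deg (template h1 h2 ε m l) : ℤ) = m := by
  change ∑ l : Fin (m + 1), (deg (letter h1 h2 ε l) : ℤ) = m
  rw [Fin.sum_univ_eq_sum_range (fun l => (deg (letter h1 h2 ε l) : ℤ))]
  simp [deg_letter, Finset.sum_sub_distrib, show 3 < m + 1 by omega]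

theorem isHomog_xiCocycle (hm : 3 ≤ m) :
    IsHomog k (m + 1) (2 - ((m : ℤ) + 1)) (xiCocycle (k := k) h1 h2 m) := by
  intro w u hne
  rw [xiCocycle_apply h1 h2 (by omega)] at hne
  obtain ⟨⟨ε, rfl⟩, rfl⟩ := (ite_ne_right_iff.mp hne).1
  rw [sum_deg_template h1 h2 hm]
  simp only [X1, deg]
  ring

theorem mul_letter_true_succ (l : ℕ) :
    mul h2.le (letter h1 h2 true l) (letter h1 h2 true (l + 1)) = none := by
  rcases l with _ | _ | _ | _ | l <;> simp [letter, mul]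

theorem X_ne_X1 : X ⟨n, h2⟩ ≠ X1 h1 h2 := by
  simp [X1, Fin.ext_iff]
  omega

theorem hdelta_apply_template_true_X1 (hm : 4 ≤ m) (b : HCochain k g n m) :
    hdelta k h2.le m b (template h1 h2 true m) (X1 h1 h2) = 0 := by
  have hhead : ∀ v, mul h2.le (X ⟨n, h2⟩) v ≠ some (X1 h1 h2) := fun v h =>
    X_ne_X1 h1 h2 (X_mul_eq_some_iff.mp h).2.symm
  have hlast : ∀ v, mul h2.le v (X ⟨n, h2⟩) ≠ some (X1 h1 h2) := fun v h =>
    X_ne_X1 h1 h2 (mul_X_eq_some_iff.mp h).2.symm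
  simp only [hdelta, template, Fin.val_zero, Fin.val_last, Fin.val_castSucc, Fin.val_succ,
    mul_letter_true_succ, Option.elim_none, mul_zero, Finset.sum_const_zero, add_zero]
  simp only [letter_of_four_le h1 h2 true hm]
  simp [letter, hhead, hlast]

end XiCocycle

/-- The computation proving Theorem 1.1(ii) of the paper: for `1 ≤ n < g` and
`i = m + 1 ≥ 5`, the cochain `c = [X B₁ Y₁ A₁ X^{i-4}]^* X₁ + [X X₁ B₁ A₁ X^{i-4}]^* X₁`
(with `X = X_{n+1}`) lies in `Cⁱ(E_{g,n})_{2-i}`, is a cocycle, and is not a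
coboundary of a homogeneous cochain. -/
theorem stmt_5 (k : Type*) [Field k] (g n : ℕ) (h1 : 1 ≤ n) (h2 : n < g)
    (m : ℕ) (hm : 4 ≤ m) :
    IsHomog k (m + 1) (2 - ((m : ℤ) + 1)) (xiCocycle (k := k) h1 h2 m) ∧
    hdelta k h2.le (m + 1) (xiCocycle (k := k) h1 h2 m) = 0 ∧
    ∀ b : HCochain k g n m, IsHomog k m (2 - ((m : ℤ) + 1)) b →
      hdelta k h2.le m b ≠ xiCocycle (k := k) h1 h2 m := by
  refine ⟨XiCocycle.isHomog_xiCocycle h1 h2 (by omega),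
    XiCocycle.hdelta_xiCocycle_eq_zero h1 h2 hm, fun b _ hb => ?_⟩
  have := congrFun (congrFun hb (XiCocycle.template h1 h2 true m)) (XiCocycle.X1 h1 h2)
  rw [XiCocycle.hdelta_apply_template_true_X1 h1 h2 hm, XiCocycle.xiCocycle_apply h1 h2 (by omega),
    if_pos ⟨⟨true, rfl⟩, rfl⟩] at this
  exact zero_ne_one this

end
end

section
/- Let T be a pretriangulated category and let (T', α, β) be a convolution of a complex X_n →^{d_n} X_{n−1} → … → X_1 →^{d_1} X_0 in T. Then (T'[1], (−1)^n α', β[1]) is a convolution of the shifted complex X_n[1] →^{d_n[1]} X_{n−1}[1] → … →^{d_1[1]} X_0[1], where α' : T'[1] → (X_n[1])[n] is the morphism induced by α : T' → X_n[n] under the canonical identification (X_n[n])[1] ≅ (X_n[1])[n]. -/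
noncomputable section
open CategoryTheory Category Limits Pretriangulated

variable {C : Type*} [Category C] [Preadditive C] [HasZeroObject C]
  [HasShift C ℤ] [∀ n : ℤ, (CategoryTheory.shiftFunctor C n).Additive] [Pretriangulated C]

/-- `IsConv n X d T α β` says that `(T, α, β)` is a convolution of the complex
`X n → X (n-1) → … → X 0` (with maps `d i : X (i+1) ⟶ X i`), i.e. it arises from
a left Postnikov diagram.  This is encoded recursively: a convolution of a
single-object complex is (an object isomorphic to) `X 0` itself, and a convolution
of `X (m+1) → … → X 0` is the cofiber `T` of a map `f₀ : T' → X 0`, where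
`(T', α', β')` is a convolution of `X (m+1) → … → X 1` and `β' ≫ f₀ = d 0`;
the map `α : T → X (m+1)[m+1]` is the composition of `g₀ : T → T'[1]` with `α'[1]`. -/
def IsConv : (m : ℕ) → (X : ℕ → C) → (∀ i : ℕ, X (i + 1) ⟶ X i) → (T : C) →
    (T ⟶ (X m)⟦(m : ℤ)⟧) → (X 0 ⟶ T) → Prop
  | 0, X, _, T, α, β =>
      ∃ e : T ≅ X 0, β ≫ e.hom = 𝟙 (X 0) ∧
        α = e.hom ≫ (shiftFunctorZero C ℤ).inv.app (X 0)
  | (m + 1), X, d, T, α, β =>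
      ∃ (T' : C) (f₀ : T' ⟶ X 0) (g₀ : T ⟶ T'⟦(1 : ℤ)⟧)
        (α' : T' ⟶ (X (m + 1))⟦(m : ℤ)⟧) (β' : X 1 ⟶ T'),
        Triangle.mk f₀ β g₀ ∈ (distTriang C) ∧
        β' ≫ f₀ = d 0 ∧
        IsConv m (fun i => X (i + 1)) (fun i => d (i + 1)) T' α' β' ∧
        α = g₀ ≫ α'⟦(1 : ℤ)⟧' ≫
          (shiftFunctorAdd' C (m : ℤ) (1 : ℤ) ((m + 1 : ℕ) : ℤ)
            (by push_cast; ring)).inv.app (X (m + 1))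

/-! Induction on the length of the Postnikov diagram. Shifting a distinguished triangle
`T' → X₀ → T → T'[1]` by `[1]` gives a distinguished triangle once the connecting morphism is
multiplied by `-1`; since `α` is built by composing the connecting morphisms, each step of the
diagram contributes one sign, whence `(-1)ⁿ`. The remaining bookkeeping is the compatibility of
the commutation `(Y[m])[1] ≅ (Y[1])[m]` with the isomorphisms `(Y[m])[1] ≅ Y[m+1]`. -/

section Shift

variable {D : Type*} [Category D] {A : Type*} [AddCommMonoid A] [HasShift D A]

lemma shift_shiftFunctorZero_inv_app_comp_shiftFunctorComm_hom_app (Y : D) (a : A) :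
    ((shiftFunctorZero D A).inv.app Y)⟦a⟧' ≫ (shiftFunctorComm D 0 a).hom.app Y =
      (shiftFunctorZero D A).inv.app (Y⟦a⟧) := by
  rw [shiftFunctorZero_inv_app_shift, ← shiftFunctorComm_symm]
  rfl

lemma shift_shiftFunctorComm_hom_app_comp_shiftFunctorAdd'_inv_app (a c b : A) (h : a + c = b)
    (Y : D) :
    ((shiftFunctorComm D a c).hom.app Y)⟦c⟧' ≫ (shiftFunctorAdd' D a c b h).inv.app (Y⟦c⟧) =
      ((shiftFunctorAdd' D a c b h).inv.app Y)⟦c⟧' ≫ (shiftFunctorComm D b c).hom.app Y := by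
  subst h
  have hcomm := shiftFunctorComm_hom_app_comp_shift_shiftFunctorAdd_hom_app (C := D) c a c Y
  simp only [shiftFunctorComm_eq_refl, Iso.refl_hom, NatTrans.id_app, Functor.comp_obj,
    comp_id] at hcomm
  rw [shiftFunctorAdd'_eq_shiftFunctorAdd, ← shiftFunctorComm_symm D c a,
    ← shiftFunctorComm_symm D c (a + c), Iso.symm_hom, Iso.symm_hom,
    ← cancel_mono ((shiftFunctorComm D c (a + c)).hom.app Y),
    ← cancel_mono (((shiftFunctorAdd D a c).hom.app Y)⟦c⟧')]
  simp only [assoc, Iso.inv_hom_id_app, hcomm]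
  simp

end Shift

lemma CategoryTheory.Pretriangulated.Triangle.shift_mk_distinguished {X₁ X₂ X₃ : C} (f : X₁ ⟶ X₂)
    (g : X₂ ⟶ X₃) (h : X₃ ⟶ X₁⟦(1 : ℤ)⟧) (hT : Triangle.mk f g h ∈ distTriang C) (n : ℤ) :
    Triangle.mk (f⟦n⟧') (g⟦n⟧') (n.negOnePow • (h⟦n⟧' ≫ (shiftFunctorComm C 1 n).hom.app X₁))
      ∈ distTriang C := by
  -- `Triangle.shift_distinguished` puts the sign on all three morphisms; the sign
  -- automorphism of the middle vertex removes it from the first two.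
  let ε : X₂⟦n⟧ ≅ X₂⟦n⟧ :=
    { hom := n.negOnePow • 𝟙 _
      inv := n.negOnePow • 𝟙 _
      hom_inv_id := by simp [smul_smul]
      inv_hom_id := by simp [smul_smul] }
  have comm₁ : f⟦n⟧' ≫ ε.hom = 𝟙 _ ≫ (n.negOnePow • f⟦n⟧') := by simp [ε]
  have comm₂ : g⟦n⟧' ≫ 𝟙 _ = ε.hom ≫ (n.negOnePow • g⟦n⟧') := by simp [ε, smul_smul]
  have comm₃ : (n.negOnePow • (h⟦n⟧' ≫ (shiftFunctorComm C 1 n).hom.app X₁)) ≫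
      (𝟙 (X₁⟦n⟧))⟦1⟧' = 𝟙 _ ≫ (n.negOnePow • (h⟦n⟧' ≫ (shiftFunctorComm C 1 n).hom.app X₁)) := by
    simp
  exact isomorphic_distinguished _ (Triangle.shift_distinguished _ hT n) _
    (Triangle.isoMk _ _ (Iso.refl _) ε (Iso.refl _) comm₁ comm₂ comm₃)

theorem stmt_9_general (n : ℕ) (X : ℕ → C) (d : ∀ i : ℕ, X (i + 1) ⟶ X i)
    (T : C) (α : T ⟶ (X n)⟦(n : ℤ)⟧) (β : X 0 ⟶ T)
    (h : IsConv n X d T α β) :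
    IsConv n (fun i => (X i)⟦(1 : ℤ)⟧) (fun i => (d i)⟦(1 : ℤ)⟧') (T⟦(1 : ℤ)⟧)
      (((-1 : ℤ) ^ n) • (α⟦(1 : ℤ)⟧' ≫ (shiftComm (X n) ((n : ℤ)) (1 : ℤ)).hom))
      (β⟦(1 : ℤ)⟧') := by
  induction n generalizing X d T β with
  | zero =>
    obtain ⟨e, hβ, rfl⟩ := h
    refine ⟨(shiftFunctor C (1 : ℤ)).mapIso e, by simp [← Functor.map_comp, hβ], ?_⟩
    simp [shift_shiftFunctorZero_inv_app_comp_shiftFunctorComm_hom_app]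
  | succ m ih =>
    obtain ⟨T', f₀, g₀, α', β', hdist, hβf, hconv, rfl⟩ := h
    refine ⟨T'⟦(1 : ℤ)⟧, f₀⟦(1 : ℤ)⟧',
      (1 : ℤ).negOnePow • (g₀⟦(1 : ℤ)⟧' ≫ (shiftFunctorComm C 1 1).hom.app T'),
      ((-1 : ℤ) ^ m) • (α'⟦(1 : ℤ)⟧' ≫ (shiftComm (X (m + 1)) (m : ℤ) (1 : ℤ)).hom),
      β'⟦(1 : ℤ)⟧', Triangle.shift_mk_distinguished _ _ _ hdist 1,
      by rw [← Functor.map_comp, hβf], ih _ _ _ _ _ hconv, ?_⟩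
    simp [pow_succ, shift_shiftFunctorComm_hom_app_comp_shiftFunctorAdd'_inv_app]

/-- Lemma 2.2 of the paper: if `(T, α, β)` is a convolution of the complex
`X n → … → X 0`, then `(T[1], (-1)ⁿ α', β[1])` is a convolution of the shifted
complex `X n[1] → … → X 0[1]`, where `α'` is induced by `α` under the canonical
identification `(X n [n])[1] ≅ (X n [1])[n]`. -/
theorem stmt_9 (n : ℕ) (hn : 1 ≤ n) (X : ℕ → C) (d : ∀ i : ℕ, X (i + 1) ⟶ X i)
    (hd : ∀ i, i + 2 ≤ n → d (i + 1) ≫ d i = 0)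
    (T : C) (α : T ⟶ (X n)⟦(n : ℤ)⟧) (β : X 0 ⟶ T)
    (h : IsConv n X d T α β) :
    IsConv n (fun i => (X i)⟦(1 : ℤ)⟧) (fun i => (d i)⟦(1 : ℤ)⟧') (T⟦(1 : ℤ)⟧)
      (((-1 : ℤ) ^ n) • (α⟦(1 : ℤ)⟧' ≫ (shiftComm (X n) ((n : ℤ)) (1 : ℤ)).hom))
      (β⟦(1 : ℤ)⟧') :=
  stmt_9_general n X d T α β h

end
end

section
/- Let k be a field, and let 0 → V_1 →^{ι} V →^{π} L → 0 be a short exact sequence of finite-dimensional k-vector spaces with dim L = 1 and dim V_1 = r. Let φ : V → W be a linear map with dim W = r, and let k_φ : det(V) ⊗ det(W)^* → V be the linear map obtained by tensoring the r-th exterior power map Λ^r(φ^*) : det(W^*) → Λ^r(V^*) with det(V) and applying the canonical contraction isomorphism det(V) ⊗ Λ^r(V^*) ≅ V. Then φ ∘ k_φ = 0, and π ∘ k_φ = 0 if and only if the composition φ ∘ ι : V_1 → W is not an isomorphism (equivalently, the induced map det(V_1) → det(W) is zero). -/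
/-!
On decomposable vectors, `k_φ(·, ζ)` is the contraction `v ↦ ∑ᵢ (-1)ⁱ g(v₀, …, v̂ᵢ, …, v_r) • vᵢ`
with the `r`-form `g = ζ ∘ Λʳφ`, and this contraction is an alternating `(r+1)`-map. Composed
with `φ` it becomes the contraction with `ζ` on `W`, an alternating `(r+1)`-map on the
`r`-dimensional space `W`, hence zero. Composed with `π` it is determined by its value on a basis
`x, ι u₁, …, ι u_r` of `V` adapted to the exact sequence; there every term but the first dies,
leaving `ζ(φιu₁ ∧ … ∧ φιu_r) • π x`. This vanishes for all `ζ` iff `φιu` is linearly dependent,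
i.e. iff `φ ∘ ι` is not bijective.
-/

open Function

/-- The exterior product `v₀ ∧ … ∧ v_{n-1}`, as an element of the `n`-th exterior
power `⋀[R]^n M` (viewed as a submodule of the exterior algebra). -/
noncomputable def wedge (R : Type*) [CommRing R] {M : Type*} [AddCommGroup M] [Module R M]
    (n : ℕ) (v : Fin n → M) : ⋀[R]^n M :=
  ⟨ExteriorAlgebra.ιMulti R n v, ExteriorAlgebra.ιMulti_range R n ⟨v, rfl⟩⟩

namespace AlternatingMap

variable {R M N : Type*} [CommRing R] [AddCommGroup M] [Module R M] [AddCommGroup N] [Module R N]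

theorem eq_smulRight_basis_det {ι : Type*} [Fintype ι] [DecidableEq ι] (e : Module.Basis ι R M)
    (f : M [⋀^ι]→ₗ[R] N) : f = e.det.smulRight (f e) := by
  refine e.ext_alternating fun i hi => ?_
  let σ : Equiv.Perm ι := Equiv.ofBijective i (Finite.injective_iff_bijective.1 hi)
  change f (e ∘ σ) = e.det.smulRight (f e) (e ∘ σ)
  simp [map_perm, Module.Basis.det_self]

theorem eq_zero_iff_map_basis_eq_zero {ι : Type*} [Fintype ι] [DecidableEq ι]
    (e : Module.Basis ι R M) (f : M [⋀^ι]→ₗ[R] N) : f = 0 ↔ f e = 0 := by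
  refine ⟨fun h => h ▸ zero_apply _, fun h => ?_⟩
  rw [eq_smulRight_basis_det e f, h]
  ext
  simp

variable {ι : Type*}

def smulRightₗ (g : M [⋀^ι]→ₗ[R] R) : N →ₗ[R] M [⋀^ι]→ₗ[R] N where
  toFun := g.smulRight
  map_add' x y := by ext; simp [smul_add]
  map_smul' c x := by ext; simp [smul_comm c]

variable {n : ℕ}

def contract (g : M [⋀^Fin n]→ₗ[R] R) : M [⋀^Fin (n + 1)]→ₗ[R] M :=
  alternatizeUncurryFin g.smulRightₗ

theorem contract_apply (g : M [⋀^Fin n]→ₗ[R] R) (v : Fin (n + 1) → M) :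
    contract g v = ∑ i : Fin (n + 1), ((-1 : R) ^ (i : ℕ) * g (i.removeNth v)) • v i := by
  simp only [contract, alternatizeUncurryFin_apply, mul_smul, ← Int.cast_smul_eq_zsmul R]
  simp [smulRightₗ]

theorem compAlternatingMap_contract_compLinearMap (f : N →ₗ[R] M) (g : M [⋀^Fin n]→ₗ[R] R) :
    f.compAlternatingMap (contract (g.compLinearMap f)) = (contract g).compLinearMap f := by
  ext v
  simp only [LinearMap.compAlternatingMap_apply, contract_apply, compLinearMap_apply, map_sum,
    map_smul]
  rfl

theorem map_contract_finCons (p : M →ₗ[R] N) (g : M [⋀^Fin n]→ₗ[R] R) (x : M) {w : Fin n → M}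
    (hw : ∀ j, p (w j) = 0) : p (contract g (Fin.cons x w)) = g w • p x := by
  simp [contract_apply, Fin.sum_univ_succ, hw]

theorem contract_eq_zero_of_finrank_le {k V : Type*} [Field k] [AddCommGroup V] [Module k V]
    [FiniteDimensional k V] (h : Module.finrank k V ≤ n) (g : V [⋀^Fin n]→ₗ[k] k) :
    contract g = 0 := by
  ext v
  refine map_linearDependent _ v fun hv => ?_
  have := hv.fintype_card_le_finrank
  simp only [Fintype.card_fin] at this
  omega

end AlternatingMap

namespace exteriorPower

variable {R M N : Type*} [CommRing R] [AddCommGroup M] [Module R M] [AddCommGroup N] [Module R N]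
  {n : ℕ}

theorem linearMap_eq_zero_iff_apply_ιMulti_basis (e : Module.Basis (Fin n) R M)
    (F : ⋀[R]^n M →ₗ[R] N) : F = 0 ↔ F (ιMulti R n e) = 0 := by
  classical
  refine ⟨fun h => h ▸ rfl, fun h => linearMap_ext ?_⟩
  rw [LinearMap.zero_compAlternatingMap,
    (F.compAlternatingMap (ιMulti R n)).eq_zero_iff_map_basis_eq_zero e]
  exact h

theorem ιMulti_eq_zero_iff {k V : Type*} [Field k] [AddCommGroup V] [Module k V]
    [FiniteDimensional k V] (h : Module.finrank k V = n) (v : Fin n → V) :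
    ιMulti k n v = 0 ↔ ¬LinearIndependent k v := by
  refine ⟨fun h0 hv => ?_, (ιMulti k n).map_linearDependent v⟩
  let b := Module.Basis.mk hv (hv.span_eq_top_of_card_eq_finrank' (by simp [h])).ge
  have hb : ⇑b = v := Module.Basis.coe_mk _ _
  have := alternatingMapLinearEquiv_apply_ιMulti b.det v
  rw [h0, map_zero, ← hb, Module.Basis.det_self] at this
  exact zero_ne_one this

end exteriorPower

theorem Module.Basis.linearIndependent_comp_iff_bijective {k V W ι : Type*} [Field k]
    [AddCommGroup V] [Module k V] [AddCommGroup W] [Module k W] [FiniteDimensional k V]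
    [FiniteDimensional k W] [Fintype ι] (u : Module.Basis ι k V) (f : V →ₗ[k] W)
    (h : Module.finrank k V = Module.finrank k W) :
    LinearIndependent k (f ∘ u) ↔ Bijective f := by
  refine ⟨fun hfu => ?_, fun hf => u.linearIndependent.map' f (LinearMap.ker_eq_bot.mpr hf.1)⟩
  have hsurj : Surjective f := by
    rw [← LinearMap.range_eq_top, eq_top_iff,
      ← hfu.span_eq_top_of_card_eq_finrank' (by rw [← h, Module.finrank_eq_card_basis u]),
      Submodule.span_le, Set.range_comp]
    exact Set.image_subset_range _ _
  exact ⟨(LinearMap.injective_iff_surjective_of_finrank_eq_finrank h).mpr hsurj, hsurj⟩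

section ShortExact

variable {k V₁ V L : Type*} [Field k] [AddCommGroup V₁] [Module k V₁] [AddCommGroup V] [Module k V]
  [AddCommGroup L] [Module k L] {ι : V₁ →ₗ[k] V} {π : V →ₗ[k] L}

theorem finrank_eq_add_of_exact [FiniteDimensional k V] (hι : Injective ι) (hπ : Surjective π)
    (hexact : LinearMap.range ι = LinearMap.ker π) :
    Module.finrank k V = Module.finrank k V₁ + Module.finrank k L := by
  rw [← LinearMap.finrank_range_add_finrank_ker π, LinearMap.range_eq_top.mpr hπ, finrank_top,
    ← hexact, LinearMap.finrank_range_of_inj hι, add_comm]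

theorem linearIndependent_finCons_of_exact (hι : Injective ι)
    (hexact : LinearMap.range ι = LinearMap.ker π) {n : ℕ} {v : Fin n → V₁}
    (hv : LinearIndependent k v) {x : V} (hx : π x ≠ 0) :
    LinearIndependent k (Fin.cons x (ι ∘ v) : Fin (n + 1) → V) := by
  refine linearIndependent_finCons.mpr
    ⟨hv.map' ι (LinearMap.ker_eq_bot.mpr hι), fun hmem => hx ?_⟩
  have : Submodule.span k (Set.range (ι ∘ v)) ≤ LinearMap.ker π := by
    rw [Submodule.span_le, ← hexact, Set.range_comp]
    exact Set.image_subset_range _ _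
  exact this hmem

theorem exists_basis_finCons_of_exact [FiniteDimensional k V] (hι : Injective ι)
    (hπ : Surjective π) (hexact : LinearMap.range ι = LinearMap.ker π)
    (hL : Module.finrank k L = 1) {r : ℕ} (u : Module.Basis (Fin r) k V₁) :
    ∃ x, π x ≠ 0 ∧ ∃ e : Module.Basis (Fin (r + 1)) k V, ⇑e = Fin.cons x (ι ∘ u) := by
  obtain ⟨x, hx⟩ : ∃ x, π x ≠ 0 := by
    have : Nontrivial L := Module.nontrivial_of_finrank_eq_succ hL
    obtain ⟨l, hl⟩ := exists_ne (0 : L)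
    obtain ⟨x, rfl⟩ := hπ l
    exact ⟨x, hl⟩
  have hu := linearIndependent_finCons_of_exact hι hexact u.linearIndependent hx
  have : Module.Finite k V₁ := Module.Finite.of_basis u
  have hV : Module.finrank k V = r + 1 := by
    rw [finrank_eq_add_of_exact hι hπ hexact, hL, Module.finrank_eq_card_basis u, Fintype.card_fin]
  exact ⟨x, hx, basisOfLinearIndependentOfCardEqFinrank hu (by simp [hV]),
    coe_basisOfLinearIndependentOfCardEqFinrank hu _⟩

end ShortExact

open AlternatingMap exteriorPower in
theorem stmt_14_general (k : Type*) [Field k]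
    (V V₁ W L : Type*)
    [AddCommGroup V] [Module k V] [FiniteDimensional k V]
    [AddCommGroup V₁] [Module k V₁] [FiniteDimensional k V₁]
    [AddCommGroup W] [Module k W] [FiniteDimensional k W]
    [AddCommGroup L] [Module k L]
    (r : ℕ)
    (ι : V₁ →ₗ[k] V) (π : V →ₗ[k] L)
    (hι : Injective ι) (hπ : Surjective π)
    (hexact : LinearMap.range ι = LinearMap.ker π)
    (hL : Module.finrank k L = 1) (hV₁ : Module.finrank k V₁ = r)
    (hW : Module.finrank k W = r)
    (φ : V →ₗ[k] W)
    (kφ : ⋀[k]^(r+1) V →ₗ[k] Module.Dual k (⋀[k]^r W) →ₗ[k] V)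
    (hkφ : ∀ (v : Fin (r+1) → V) (ζ : Module.Dual k (⋀[k]^r W)),
      kφ (wedge k (r+1) v) ζ =
        ∑ i : Fin (r+1),
          ((-1 : k) ^ (i : ℕ) * ζ (wedge k r (fun j => φ (v (i.succAbove j))))) • v i) :
    (∀ (ω : ⋀[k]^(r+1) V) (ζ : Module.Dual k (⋀[k]^r W)), φ (kφ ω ζ) = 0) ∧
    ((∀ (ω : ⋀[k]^(r+1) V) (ζ : Module.Dual k (⋀[k]^r W)), π (kφ ω ζ) = 0) ↔
      ¬ Function.Bijective (φ.comp ι)) := by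
  have hk (ζ : Module.Dual k (⋀[k]^r W)) : (kφ.flip ζ).compAlternatingMap (ιMulti k (r + 1)) =
      contract ((ζ.compAlternatingMap (ιMulti k r)).compLinearMap φ) := by
    ext v
    rw [contract_apply]
    exact hkφ v ζ
  refine ⟨fun ω ζ => ?_, ?_⟩
  · have : φ ∘ₗ kφ.flip ζ = 0 := linearMap_ext <| by
      change φ.compAlternatingMap ((kφ.flip ζ).compAlternatingMap _) = 0
      rw [hk, compAlternatingMap_contract_compLinearMap, contract_eq_zero_of_finrank_le hW.le,
        zero_compLinearMap]
    exact LinearMap.congr_fun this ω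
  let u := Module.finBasisOfFinrankEq k V₁ hV₁
  obtain ⟨x, hx, e, he⟩ := exists_basis_finCons_of_exact hι hπ hexact hL u
  have hιu (j : Fin r) : π ((ι ∘ u) j) = 0 :=
    congr_fun (LinearMap.exact_iff.mpr hexact.symm).comp_eq_zero (u j)
  calc (∀ ω ζ, π (kφ ω ζ) = 0)
      ↔ ∀ ζ, π ∘ₗ kφ.flip ζ = 0 := by
        simp only [LinearMap.ext_iff, LinearMap.comp_apply, LinearMap.flip_apply,
          LinearMap.zero_apply]
        exact forall_comm
    _ ↔ ∀ ζ : Module.Dual k (⋀[k]^r W), ζ (ιMulti k r (φ.comp ι ∘ u)) = 0 := by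
      refine forall_congr' fun ζ => ?_
      rw [linearMap_eq_zero_iff_apply_ιMulti_basis e, LinearMap.comp_apply,
        ← LinearMap.compAlternatingMap_apply, hk, he, map_contract_finCons π _ x hιu,
        smul_eq_zero, or_iff_left hx]
      rfl
    _ ↔ ιMulti k r (φ.comp ι ∘ u) = 0 := Module.forall_dual_apply_eq_zero_iff k _
    _ ↔ ¬Bijective (φ.comp ι) := by
      rw [ιMulti_eq_zero_iff hW, u.linearIndependent_comp_iff_bijective _ (hV₁.trans hW.symm)]

/-- Fiberwise content of Lemma 3.2 of the paper.  Given a short exact sequence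
`0 → V₁ → V → L → 0` with `dim L = 1`, `dim V₁ = r`, and a linear map `φ : V → W`
with `dim W = r`, let `k_φ : det V ⊗ det(W)* → V` be the canonical contraction map;
it is characterized on decomposable elements by
`k_φ((v₀ ∧ … ∧ v_r) ⊗ ζ) = ∑ᵢ (-1)ⁱ ζ(φv₀ ∧ … ∧ φv̂ᵢ ∧ … ∧ φv_r) • vᵢ`.
Then `φ ∘ k_φ = 0`, and `π ∘ k_φ = 0` iff `φ ∘ ι : V₁ → W` is not an isomorphism. -/
theorem stmt_14 (k : Type*) [Field k]
    (V V₁ W L : Type*)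
    [AddCommGroup V] [Module k V] [FiniteDimensional k V]
    [AddCommGroup V₁] [Module k V₁] [FiniteDimensional k V₁]
    [AddCommGroup W] [Module k W] [FiniteDimensional k W]
    [AddCommGroup L] [Module k L] [FiniteDimensional k L]
    (r : ℕ)
    (ι : V₁ →ₗ[k] V) (π : V →ₗ[k] L)
    (hι : Injective ι) (hπ : Surjective π)
    (hexact : LinearMap.range ι = LinearMap.ker π)
    (hL : Module.finrank k L = 1) (hV₁ : Module.finrank k V₁ = r)
    (hW : Module.finrank k W = r)
    (φ : V →ₗ[k] W)
    (kφ : ⋀[k]^(r+1) V →ₗ[k] Module.Dual k (⋀[k]^r W) →ₗ[k] V)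
    (hkφ : ∀ (v : Fin (r+1) → V) (ζ : Module.Dual k (⋀[k]^r W)),
      kφ (wedge k (r+1) v) ζ =
        ∑ i : Fin (r+1),
          ((-1 : k) ^ (i : ℕ) * ζ (wedge k r (fun j => φ (v (i.succAbove j))))) • v i) :
    (∀ (ω : ⋀[k]^(r+1) V) (ζ : Module.Dual k (⋀[k]^r W)), φ (kφ ω ζ) = 0) ∧
    ((∀ (ω : ⋀[k]^(r+1) V) (ζ : Module.Dual k (⋀[k]^r W)), π (kφ ω ζ) = 0) ↔
      ¬ Function.Bijective (φ.comp ι)) :=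
  stmt_14_general k V V₁ W L r ι π hι hπ hexact hL hV₁ hW φ kφ hkφ
end
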